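/- arXiv:2106.15486 — 5 statements merged into one kernel-verified Lean document; each statement's English description precedes it below -/
import Mathlib

section
/- Let 𝒪 be a discrete valuation ring with maximal ideal generated by a uniformizer x and residue field F = 𝒪/x𝒪, let M be a finitely generated free 𝒪-module equipped with a non-degenerate symmetric bilinear form ⟨ , ⟩ : M × M → 𝒪, and let G be the Gram matrix of this form with respect to some basis. Define J_k(M) = {m ∈ M : ⟨m, u⟩ ∈ x^k 𝒪 for all u ∈ M} and J_k(M_F) = (J_k(M) + xM)/xM ⊆ M/xM. Then Σ_{k>0} dim_F J_k(M_F) = ν_x(det G), where ν_x is the valuation on 𝒪. -/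
/-!
By the Smith normal form there are bases `b'`, `b` of `M` in which `m ↦ ⟨m, -⟩` is diagonal,
`b' i ↦ (w i * x ^ t i) • b i` with units `w i`, so that `∑ i, t i = ν_x(det G)`. In the
coordinates of `b'`, `J_{k+1}(M)` is the product of the ideals `(x ^ (k + 1 - t i))`; since the
reduction of an automorphism of `M` is an automorphism of `M_F`, `J_{k+1}(M_F)` has dimension
`#{i | k < t i}`. Summing over `k` counts each `i` exactly `t i` times.
-/

open Module Matrix Submodule

theorem forall_dotProduct_mem_iff {R ι : Type*} [CommRing R] [Fintype ι] (I : Ideal R)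
    (w : ι → R) : (∀ v, w ⬝ᵥ v ∈ I) ↔ ∀ j, w j ∈ I := by
  classical
  exact ⟨fun h j => by simpa using h (Pi.single j 1),
    fun h v => Ideal.sum_mem _ fun j _ => Ideal.mul_mem_right _ _ (h j)⟩

theorem LinearMap.apply_mem_of_forall_mem {R ι κ : Type*} [CommRing R] [Fintype ι]
    (f : (ι → R) →ₗ[R] (κ → R)) {I : Ideal R} {v : ι → R} (hv : ∀ j, v j ∈ I) (i : κ) :
    f v i ∈ I := by
  classical
  rw [f.pi_apply_eq_sum_univ v, Finset.sum_apply]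
  exact Ideal.sum_mem _ fun j _ => Ideal.mul_mem_right _ _ (hv j)

theorem LinearEquiv.forall_apply_mem_iff {R ι κ : Type*} [CommRing R] [Fintype ι] [Fintype κ]
    (e : (ι → R) ≃ₗ[R] (κ → R)) (I : Ideal R) (v : ι → R) :
    (∀ i, e v i ∈ I) ↔ ∀ j, v j ∈ I :=
  ⟨fun h j => by simpa using (e.symm : (κ → R) →ₗ[R] (ι → R)).apply_mem_of_forall_mem h j,
    fun h => (e : (ι → R) →ₗ[R] (κ → R)).apply_mem_of_forall_mem h⟩

theorem LinearMap.exists_toMatrix_eq_diagonal_of_injective {R M ι : Type*} [CommRing R]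
    [IsDomain R] [IsPrincipalIdealRing R] [AddCommGroup M] [Module R M] [Fintype ι]
    [DecidableEq ι] (b₀ : Basis ι R M) {L : M →ₗ[R] M} (hL : Function.Injective L) :
    ∃ (b b' : Basis ι R M) (a : ι → R), toMatrix b' b L = diagonal a := by
  set e := LinearEquiv.ofInjective L hL
  obtain ⟨b, a, bL, hb⟩ :=
    Submodule.exists_smith_normal_form_of_rank_eq b₀ e.finrank_eq.symm
  refine ⟨b, bL.map e.symm, a, ?_⟩
  ext i j
  have hLj : L (e.symm (bL j)) = a j • b j := by
    rw [← hb]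
    exact congrArg Subtype.val (e.apply_symm_apply (bL j))
  rw [toMatrix_apply, Basis.map_apply, hLj, map_smul, b.repr_self]
  by_cases hij : i = j
  · subst hij
    simp
  · simp [hij]

theorem LinearMap.associated_prod_det_of_toMatrix_eq_diagonal {R M ι : Type*} [CommRing R]
    [AddCommGroup M] [Module R M] [Fintype ι] [DecidableEq ι] {b b' : Basis ι R M}
    {L : M →ₗ[R] M} {a : ι → R} (h : toMatrix b' b L = diagonal a) :
    Associated (∏ i, a i) (LinearMap.det L) := by
  have hcomp : toMatrix b b L = diagonal a * toMatrix b b' (LinearEquiv.refl R M) := by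
    rw [← h, ← toMatrix_comp]
    rfl
  rw [← LinearMap.det_toMatrix b, hcomp, det_mul, det_diagonal]
  exact associated_mul_unit_right _ _ (LinearEquiv.isUnit_det (LinearEquiv.refl R M) b b')

theorem finrank_span_reduce_image_linearEquiv {R S ι : Type*} [CommRing R] [CommRing S]
    [Fintype ι] (π : R →+* S) (Q : (ι → R) ≃ₗ[R] (ι → R)) (s : Set (ι → R)) :
    finrank S (span S ((fun m i => π (m i)) '' (Q '' s))) =
      finrank S (span S ((fun m i => π (m i)) '' s)) := by
  classical
  set A := LinearMap.toMatrix' (Q : (ι → R) →ₗ[R] (ι → R))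
  set A' := LinearMap.toMatrix' (Q.symm : (ι → R) →ₗ[R] (ι → R))
  have hAA' : A * A' = 1 := by
    rw [← LinearMap.toMatrix'_comp, Q.comp_symm, LinearMap.toMatrix'_id]
  have hA'A : A' * A = 1 := by
    rw [← LinearMap.toMatrix'_comp, Q.symm_comp, LinearMap.toMatrix'_id]
  set Q' := toLin'OfInv (M := A'.map π) (M' := A.map π)
    (by rw [← Matrix.map_mul, hA'A, Matrix.map_one _ π.map_zero π.map_one])
    (by rw [← Matrix.map_mul, hAA', Matrix.map_one _ π.map_zero π.map_one])
  have hreduce : ∀ m, (fun i => π (Q m i)) = Q' (fun i => π (m i)) := by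
    intro m
    ext i
    have hQ : Q m = A *ᵥ m := (LinearMap.toMatrix'_mulVec _ m).symm
    rw [hQ, RingHom.map_mulVec]
    rfl
  have himage : (fun m i => π (m i)) '' (Q '' s) = Q' '' ((fun m i => π (m i)) '' s) := by
    rw [Set.image_image, Set.image_image]
    exact Set.image_congr fun m _ => hreduce m
  rw [himage, ← LinearEquiv.coe_coe, span_image, LinearEquiv.finrank_map_eq]

theorem finrank_span_reduce_pi_ideal {R ι : Type*} [CommRing R] [Fintype ι] {P : Ideal R}
    (hP : P ≠ ⊤) (I : ι → Ideal R) (s : Finset ι) (htop : ∀ i ∈ s, I i = ⊤)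
    (hle : ∀ i ∉ s, I i ≤ P) :
    finrank (R ⧸ P) (span (R ⧸ P)
      ((fun c i => Ideal.Quotient.mk P (c i)) '' {c : ι → R | ∀ i, c i ∈ I i})) = s.card := by
  classical
  have : Nontrivial (R ⧸ P) := Ideal.Quotient.nontrivial_iff.mpr hP
  set e := Pi.basisFun (R ⧸ P) ι
  have hspan : span (R ⧸ P)
      ((fun c i => Ideal.Quotient.mk P (c i)) '' {c : ι → R | ∀ i, c i ∈ I i}) = span (R ⧸ P) (Set.range (e ∘ ((↑) : s → ι))) := by
    apply le_antisymm
    · rw [span_le]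
      rintro _ ⟨c, hc, rfl⟩
      simp only [SetLike.mem_coe]
      rw [← e.sum_repr (fun i => Ideal.Quotient.mk P (c i))]
      refine sum_mem fun i _ => ?_
      by_cases hi : i ∈ s
      · exact smul_mem _ _ (subset_span ⟨⟨i, hi⟩, rfl⟩)
      · have hci : Ideal.Quotient.mk P (c i) = 0 :=
          Ideal.Quotient.eq_zero_iff_mem.2 (hle i hi (hc i))
        simp only [e, Pi.basisFun_repr, hci, zero_smul]
        exact zero_mem _
    · rw [span_le]
      rintro _ ⟨⟨i, hi⟩, rfl⟩
      refine subset_span ⟨Pi.single i 1, fun j => ?_, ?_⟩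
      · by_cases hj : j = i
        · subst hj
          simp [htop j hi]
        · simp [hj]
      · ext j
        by_cases hj : j = i
        · subst hj
          simp [e]
        · simp [e, hj]
  rw [hspan, finrank_span_eq_card (e.linearIndependent.comp _ Subtype.val_injective),
    Fintype.card_coe]

theorem unit_mul_pow_mul_mem_span_pow_iff {R : Type*} [CommRing R] [IsDomain R] {x w : R}
    (hx : x ≠ 0) (hw : IsUnit w) (t n : ℕ) (c : R) :
    w * x ^ t * c ∈ Ideal.span {x} ^ n ↔ c ∈ Ideal.span {x} ^ (n - t) := by
  rw [Ideal.span_singleton_pow, Ideal.span_singleton_pow, Ideal.mem_span_singleton,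
    Ideal.mem_span_singleton, mul_assoc, hw.dvd_mul_left]
  rcases le_or_gt n t with hnt | htn
  · rw [Nat.sub_eq_zero_of_le hnt, pow_zero]
    exact iff_of_true (dvd_mul_of_dvd_left (pow_dvd_pow x hnt) c) (one_dvd c)
  · rw [← Nat.add_sub_cancel' htn.le, pow_add, Nat.add_sub_cancel_left,
      mul_dvd_mul_iff_left (pow_ne_zero t hx)]

theorem tsum_card_filter_lt_eq_sum {ι : Type*} [Fintype ι] (t : ι → ℕ) :
    ∑' k : ℕ, (Finset.univ.filter fun i => k < t i).card = ∑ i, t i := by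
  have hle : ∀ i, t i ≤ ∑ j, t j := fun i =>
    Finset.single_le_sum (fun j _ => Nat.zero_le (t j)) (Finset.mem_univ i)
  rw [tsum_eq_sum (s := Finset.range (∑ i, t i)) fun k hk => ?_]
  · simp_rw [Finset.card_filter]
    rw [Finset.sum_comm]
    refine Finset.sum_congr rfl fun i _ => ?_
    rw [← Finset.card_filter, ← Nat.Iio_eq_range, Finset.Iio_filter_lt, Nat.card_Iio,
      min_eq_right (hle i)]
  · rw [Finset.mem_range, not_lt] at hk
    rw [Finset.card_eq_zero, Finset.filter_eq_empty_iff]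
    exact fun i _ => not_lt.2 ((hle i).trans hk)

theorem finrank_span_reduce_eq_card_of_toMatrix_eq_diagonal {R ι : Type*} [CommRing R]
    [IsDomain R] [Fintype ι] [DecidableEq ι] {x : R} (hx : Irreducible x)
    {L : (ι → R) →ₗ[R] (ι → R)} {b b' : Basis ι R (ι → R)} {w : ι → Rˣ} {t : ι → ℕ}
    (hL : LinearMap.toMatrix b' b L = diagonal fun i => w i * x ^ t i) (k : ℕ) :
    finrank (R ⧸ Ideal.span {x}) (span (R ⧸ Ideal.span {x})
      ((fun m i => Ideal.Quotient.mk (Ideal.span {x}) (m i)) ''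
        {m : ι → R | ∀ j, L m j ∈ Ideal.span {x} ^ (k + 1)})) =
      (Finset.univ.filter fun i => k < t i).card := by
  have hJ : {m : ι → R | ∀ j, L m j ∈ Ideal.span {x} ^ (k + 1)} =
      b'.equivFun.symm '' {c | ∀ i, c i ∈ Ideal.span {x} ^ (k + 1 - t i)} := by
    rw [LinearEquiv.image_symm_eq_preimage]
    ext m
    simp only [Set.mem_ofPred_eq, Set.mem_preimage]
    rw [← b.equivFun.forall_apply_mem_iff]
    refine forall_congr' fun i => ?_
    have hdiag : b.equivFun (L m) i = w i * x ^ t i * b'.equivFun m i := by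
      rw [Basis.equivFun_apply, Basis.equivFun_apply, ← LinearMap.toMatrix_mulVec_repr b' b, hL,
        mulVec_diagonal]
    rw [hdiag]
    exact unit_mul_pow_mul_mem_span_pow_iff hx.ne_zero (w i).isUnit _ _ _
  rw [hJ, finrank_span_reduce_image_linearEquiv]
  refine finrank_span_reduce_pi_ideal (Ideal.span_singleton_ne_top hx.not_isUnit) _ _
    (fun i hi => ?_) (fun i hi => ?_)
  · rw [Finset.mem_filter] at hi
    rw [Nat.sub_eq_zero_of_le hi.2, pow_zero, Ideal.one_eq_top]
  · rw [Finset.mem_filter, not_and, not_lt] at hi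
    exact Ideal.pow_le_self (by have := hi (Finset.mem_univ i); omega)

theorem tsum_finrank_span_reduce_eq_of_det_eq {R ι : Type*} [CommRing R] [IsDomain R]
    [IsDiscreteValuationRing R] [Fintype ι] [DecidableEq ι] {x : R} (hx : Irreducible x)
    (L : (ι → R) →ₗ[R] (ι → R)) {u : R} (hu : IsUnit u) {N : ℕ}
    (hdet : LinearMap.det L = u * x ^ N) :
    ∑' k : ℕ, finrank (R ⧸ Ideal.span {x}) (span (R ⧸ Ideal.span {x})
      ((fun m i => Ideal.Quotient.mk (Ideal.span {x}) (m i)) ''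
        {m : ι → R | ∀ j, L m j ∈ Ideal.span {x} ^ (k + 1)})) = N := by
  have hdet0 : LinearMap.det L ≠ 0 := hdet ▸ mul_ne_zero hu.ne_zero (pow_ne_zero N hx.ne_zero)
  have hL : Function.Injective L :=
    LinearMap.ker_eq_bot.mp (not_not.mp (mt LinearMap.det_eq_zero_iff_ker_ne_bot.mpr hdet0))
  obtain ⟨b, b', a, hba⟩ := L.exists_toMatrix_eq_diagonal_of_injective (Pi.basisFun R ι) hL
  have hassoc := LinearMap.associated_prod_det_of_toMatrix_eq_diagonal hba
  have ha : ∀ i, a i ≠ 0 := fun i =>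
    Finset.prod_ne_zero_iff.mp (hassoc.ne_zero_iff.mpr hdet0) i (Finset.mem_univ i)
  choose t w hw using fun i => IsDiscreteValuationRing.eq_unit_mul_pow_irreducible (ha i) hx
  obtain rfl : a = fun i => w i * x ^ t i := funext hw
  have hN : ∑ i, t i = N := by
    obtain ⟨c, hc⟩ := hassoc
    rw [hdet, Finset.prod_mul_distrib, Finset.prod_pow_eq_pow_sum] at hc
    refine IsDiscreteValuationRing.unit_mul_pow_congr_pow hx hx ((∏ i, w i) * c) hu.unit _ _ ?_
    rw [IsUnit.unit_spec, ← hc]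
    push_cast
    ring
  simp_rw [finrank_span_reduce_eq_card_of_toMatrix_eq_diagonal hx hba]
  rw [tsum_card_filter_lt_eq_sum, hN]

theorem jantzen_sum_dim_eq_valuation_general {𝒪 : Type*} [CommRing 𝒪] [IsDomain 𝒪]
    [IsDiscreteValuationRing 𝒪] (x : 𝒪) (hx : Irreducible x)
    {ι : Type*} [Fintype ι] [DecidableEq ι]
    (B : (ι → 𝒪) →ₗ[𝒪] (ι → 𝒪) →ₗ[𝒪] 𝒪)
    (G : Matrix ι ι 𝒪) (hG : ∀ i j, G i j = B (Pi.single i 1) (Pi.single j 1))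
    (N : ℕ) (u : 𝒪) (hu : IsUnit u) (hdet : G.det = u * x ^ N) :
    ∑' k : ℕ, Module.finrank (𝒪 ⧸ Ideal.span {x})
        (Submodule.span (𝒪 ⧸ Ideal.span {x})
          ((fun m : ι → 𝒪 => fun i => Ideal.Quotient.mk (Ideal.span {x}) (m i)) ''
            {m : ι → 𝒪 | ∀ v : ι → 𝒪, B m v ∈ Ideal.span {x} ^ (k + 1)})) = N := by
  have hB : B = Matrix.toLinearMap₂' 𝒪 G := by
    rw [show G = LinearMap.toMatrix₂' 𝒪 B from Matrix.ext hG, toLinearMap₂'_toMatrix']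
  have hJ : ∀ k : ℕ, {m : ι → 𝒪 | ∀ v, B m v ∈ Ideal.span {x} ^ (k + 1)} =
      {m | ∀ j, G.vecMulLinear m j ∈ Ideal.span {x} ^ (k + 1)} := fun k => by
    ext m
    simp only [Set.mem_ofPred_eq, hB, toLinearMap₂'_apply', dotProduct_mulVec, vecMulLinear_apply]
    exact forall_dotProduct_mem_iff _ _
  rw [tsum_congr fun k => by rw [hJ k]]
  refine tsum_finrank_span_reduce_eq_of_det_eq hx G.vecMulLinear hu ?_
  rw [← mulVecLin_transpose, ← toLin'_apply', LinearMap.det_toLin', det_transpose, hdet]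

/-- Jantzen's lemma over a discrete valuation ring 𝒪 with uniformizer x and residue field
F = 𝒪/(x): let M = 𝒪^ι carry a non-degenerate symmetric bilinear form B with Gram matrix G
and ν_x(det G) = N (i.e. det G = u·x^N with u a unit).  With
J_k(M) = {m : ⟨m,u⟩ ∈ x^k𝒪 ∀ u} and J_k(M_F) the image of J_k(M) in M/xM ≅ F^ι, we have
Σ_{k>0} dim_F J_k(M_F) = ν_x(det G). -/
theorem jantzen_sum_dim_eq_valuation {𝒪 : Type*} [CommRing 𝒪] [IsDomain 𝒪]
    [IsDiscreteValuationRing 𝒪] (x : 𝒪) (hx : Irreducible x)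
    {ι : Type*} [Fintype ι] [DecidableEq ι]
    (B : (ι → 𝒪) →ₗ[𝒪] (ι → 𝒪) →ₗ[𝒪] 𝒪)
    (hsymm : ∀ m u, B m u = B u m)
    (G : Matrix ι ι 𝒪) (hG : ∀ i j, G i j = B (Pi.single i 1) (Pi.single j 1))
    (N : ℕ) (u : 𝒪) (hu : IsUnit u) (hdet : G.det = u * x ^ N) :
    ∑' k : ℕ, Module.finrank (𝒪 ⧸ Ideal.span {x})
        (Submodule.span (𝒪 ⧸ Ideal.span {x})
          ((fun m : ι → 𝒪 => fun i => Ideal.Quotient.mk (Ideal.span {x}) (m i)) ''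
            {m : ι → 𝒪 | ∀ v : ι → 𝒪, B m v ∈ Ideal.span {x} ^ (k + 1)})) = N :=
  jantzen_sum_dim_eq_valuation_general x hx B G hG N u hu hdet
end

section
/- Let M be a finitely generated free ℤ-module with a non-degenerate symmetric bilinear form ⟨ , ⟩ : M × M → ℤ with Gram matrix G, let p be a prime, and define J_k(M) = {m ∈ M : ⟨m, u⟩ ∈ p^k ℤ for all u ∈ M} and J_k(M_{𝔽_p}) = (J_k(M) + pM)/pM. Then Σ_{k>0} dim_{𝔽_p} J_k(M_{𝔽_p}) = ν_p(det G), where ν_p is the p-adic valuation. -/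
/-!
View `m ↦ ⟨m, ·⟩` as the endomorphism `g = Gᵀ` of `ℤ^ι` and put it in Smith normal form:
`g (e i) = a i • f i` for bases `e`, `f`, so `det G = ±∏ a i`. Then `m ∈ J_n(M)` iff
`p^n ∣ a i * e.repr m i` for all `i`, and since the reduction mod `p` of a `ℤ`-basis is an
`𝔽_p`-basis, the image of `J_n(M)` in `𝔽_p^ι` is spanned by the reductions of the `e i` with
`p^n ∣ a i`. Hence `dim J_{k+1}(M_{𝔽_p}) = #{i | k < ν_p(a i)}`, and summing over `k` gives
`∑ ν_p(a i) = ν_p(det G)`.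
-/

open Module Submodule Finset Matrix

section Dvd

variable {R M ι : Type*} [CommSemiring R] [AddCommMonoid M] [Module R M] [Fintype ι]

theorem Matrix.forall_dvd_dotProduct_iff [DecidableEq ι] (x : ι → R) (d : R) :
    (∀ v, d ∣ x ⬝ᵥ v) ↔ ∀ j, d ∣ x j :=
  ⟨fun h j => by simpa using h (Pi.single j 1),
    fun h _ => Finset.dvd_sum fun j _ => (h j).mul_right _⟩

theorem Module.Basis.forall_dvd_repr_iff (b : Basis ι R M) (d : R) (x : M) :
    (∀ i, d ∣ b.repr x i) ↔ ∀ φ : M →ₗ[R] R, d ∣ φ x := by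
  refine ⟨fun h φ => ?_, fun h i => h (b.coord i)⟩
  rw [← b.sum_repr x, map_sum]
  exact Finset.dvd_sum fun i _ => by rw [map_smul, smul_eq_mul]; exact (h i).mul_right _

theorem Module.Basis.forall_dvd_repr_iff_forall_dvd_apply (b : Basis ι R (ι → R)) (d : R)
    (x : ι → R) : (∀ i, d ∣ b.repr x i) ↔ ∀ j, d ∣ x j := by
  rw [b.forall_dvd_repr_iff, ← (Pi.basisFun R ι).forall_dvd_repr_iff]
  simp only [Pi.basisFun_repr]

end Dvd

theorem LinearMap.exists_basis_apply_eq_smul_basis {R M ι : Type*} [CommRing R] [IsDomain R]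
    [IsPrincipalIdealRing R] [AddCommGroup M] [Module R M] [Finite ι] (b : Basis ι R M)
    {g : M →ₗ[R] M} (hg : Function.Injective g) :
    ∃ (e f : Basis ι R M) (a : ι → R), ∀ i, g (e i) = a i • f i := by
  let gN := LinearEquiv.ofInjective g hg
  obtain ⟨f, a, bN, hbN⟩ := Submodule.exists_smith_normal_form_of_rank_eq b gN.finrank_eq.symm
  refine ⟨bN.map gN.symm, f, a, fun i => ?_⟩
  rw [← hbN, Basis.map_apply]
  exact congrArg Subtype.val (gN.apply_symm_apply (bN i))

section Diagonal

variable {R M ι : Type*} [CommRing R] [AddCommGroup M] [Module R M] [Fintype ι] [DecidableEq ι]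
  {e f : Basis ι R M} {g : M →ₗ[R] M} {a : ι → R}

theorem LinearMap.toMatrix_eq_diagonal_of_apply_eq_smul (h : ∀ i, g (e i) = a i • f i) :
    LinearMap.toMatrix e f g = diagonal a := by
  ext i j
  rw [LinearMap.toMatrix_apply, h, map_smul, Basis.repr_self, Finsupp.smul_single, smul_eq_mul,
    mul_one, diagonal_apply, Finsupp.single_apply]
  grind

theorem LinearMap.repr_apply_eq_mul_repr_of_apply_eq_smul (h : ∀ i, g (e i) = a i • f i)
    (m : M) (i : ι) : f.repr (g m) i = a i * e.repr m i := by
  rw [← LinearMap.toMatrix_mulVec_repr e f, toMatrix_eq_diagonal_of_apply_eq_smul h,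
    mulVec_diagonal]

theorem LinearMap.associated_det_prod_of_apply_eq_smul (h : ∀ i, g (e i) = a i • f i) :
    Associated (LinearMap.det g) (∏ i, a i) := by
  have : Invertible (e.toMatrix f) := e.invertibleToMatrix f
  rw [← LinearMap.det_toMatrix f, ← g.comp_id, LinearMap.toMatrix_comp f e f, det_mul,
    toMatrix_eq_diagonal_of_apply_eq_smul h, det_diagonal, LinearMap.toMatrix_id_eq_basis_toMatrix]
  exact associated_mul_unit_left _ _ (isUnit_det_of_invertible _)

end Diagonal

section Padic

variable {p : ℕ}

theorem padicValInt_eq_of_associated {a b : ℤ} (h : Associated a b) :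
    padicValInt p a = padicValInt p b := by
  rw [padicValInt, padicValInt, Int.natAbs_eq_iff_associated.2 h]

theorem padicValInt_prod [Fact p.Prime] {ι : Type*} (s : Finset ι) (a : ι → ℤ)
    (ha : ∀ i ∈ s, a i ≠ 0) :
    padicValInt p (∏ i ∈ s, a i) = ∑ i ∈ s, padicValInt p (a i) := by
  classical
  induction s using Finset.induction_on with
  | empty => simp
  | insert i s hi ih =>
    rw [prod_insert hi, sum_insert hi, padicValInt.mul (ha i (mem_insert_self i s))
      (prod_ne_zero_iff.2 fun j hj => ha j (mem_insert_of_mem hj)),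
      ih fun j hj => ha j (mem_insert_of_mem hj)]

end Padic

theorem tsum_card_filter_lt {ι : Type*} [Fintype ι] (ν : ι → ℕ) :
    ∑' k : ℕ, #{i | k < ν i} = ∑ i, ν i := by
  simp_rw [card_filter]
  rw [Summable.tsum_finsetSum fun i _ => summable_of_hasFiniteSupport ?_]
  · refine sum_congr rfl fun i _ => ?_
    rw [tsum_eq_sum (s := range (ν i)) (by simp), sum_ite_of_true (by simp)]
    simp
  · exact (Set.finite_Iio (ν i)).subset fun k hk => by simpa using hk

section ReduceMod

variable (p : ℕ) (ι : Type*)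

def reduceMod : (ι → ℤ) →ₗ[ℤ] (ι → ZMod p) :=
  (Int.castAddHom (ZMod p)).toIntLinearMap.compLeft ι

variable {p ι}

theorem coe_reduceMod : ⇑(reduceMod p ι) = fun m i => (m i : ZMod p) := rfl

theorem reduceMod_surjective : Function.Surjective (reduceMod p ι) :=
  fun x => ⟨fun i => (x i).cast, funext fun i => ZMod.intCast_zmod_cast (x i)⟩

theorem span_range_reduceMod_comp_basis (e : Basis ι ℤ (ι → ℤ)) :
    span (ZMod p) (Set.range (reduceMod p ι ∘ e)) = ⊤ := by
  have hℤ : span ℤ (Set.range (reduceMod p ι ∘ e)) = ⊤ := by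
    rw [Set.range_comp, ← map_span, e.span_eq, Submodule.map_top, LinearMap.range_eq_top]
    exact reduceMod_surjective
  exact eq_top_iff.2 fun x _ => span_le_restrictScalars ℤ (ZMod p) _ (hℤ ▸ mem_top)

variable [Fintype ι] [Fact p.Prime]

theorem linearIndependent_reduceMod_comp_basis (e : Basis ι ℤ (ι → ℤ)) :
    LinearIndependent (ZMod p) (reduceMod p ι ∘ e) :=
  linearIndependent_of_top_le_span_of_card_eq_finrank (span_range_reduceMod_comp_basis e).ge
    (by simp)

theorem finrank_span_reduceMod_image (e : Basis ι ℤ (ι → ℤ)) (S : Set (ι → ℤ)) (s : Finset ι)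
    (hS : ∀ m ∈ S, ∀ i ∉ s, (p : ℤ) ∣ e.repr m i) (he : ∀ i ∈ s, e i ∈ S) :
    finrank (ZMod p) (span (ZMod p) (reduceMod p ι '' S)) = #s := by
  have hspan : span (ZMod p) (reduceMod p ι '' S) =
      span (ZMod p) (Set.range fun i : s => reduceMod p ι (e i)) := by
    apply le_antisymm
    · rw [span_le]
      rintro _ ⟨m, hm, rfl⟩
      rw [← e.sum_repr m, map_sum]
      refine sum_mem fun i _ => ?_
      rw [map_zsmul]
      by_cases hi : i ∈ s
      · exact smul_of_tower_mem _ _ (subset_span ⟨⟨i, hi⟩, rfl⟩)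
      · rw [← Int.cast_smul_eq_zsmul (ZMod p),
          (ZMod.intCast_zmod_eq_zero_iff_dvd _ p).2 (hS m hm i hi), zero_smul]
        exact zero_mem _
    · exact span_mono (Set.range_subset_iff.2 fun i => ⟨e i, he i i.2, rfl⟩)
  rw [hspan, finrank_span_eq_card (b := fun i : s => reduceMod p ι (e i))
    ((linearIndependent_reduceMod_comp_basis e).comp _ Subtype.val_injective), Fintype.card_coe]

theorem finrank_span_reduceMod_setOf_forall_dvd (e : Basis ι ℤ (ι → ℤ)) (a : ι → ℤ) (n : ℕ) :
    finrank (ZMod p) (span (ZMod p)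
      (reduceMod p ι '' {m | ∀ i, (p : ℤ) ^ n ∣ a i * e.repr m i})) =
      #{i | (p : ℤ) ^ n ∣ a i} := by
  classical
  refine finrank_span_reduceMod_image e _ _ (fun m hm i hi => ?_) (fun i hi j => ?_)
  · by_contra hpm
    have hcop : IsCoprime ((p : ℤ) ^ n) (e.repr m i) :=
      ((Nat.prime_iff_prime_int.1 Fact.out).coprime_iff_not_dvd.2 hpm).pow_left
    exact hi (mem_filter.2 ⟨mem_univ i, hcop.dvd_of_dvd_mul_right (hm i)⟩)
  · rw [e.repr_self, Finsupp.single_apply]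
    split_ifs with hij
    · simpa [hij] using (mem_filter.1 hi).2
    · simp

end ReduceMod

theorem LinearMap.apply_apply_eq_transpose_mulVec_dotProduct {R ι : Type*} [CommRing R]
    [Fintype ι] [DecidableEq ι] (B : (ι → R) →ₗ[R] (ι → R) →ₗ[R] R) (m v : ι → R) :
    B m v = (toMatrix₂' R B)ᵀ *ᵥ m ⬝ᵥ v := by
  conv_lhs => rw [← Matrix.toLinearMap₂'_toMatrix' (R := R) B]
  rw [toLinearMap₂'_apply', dotProduct_mulVec, mulVec_transpose]

theorem jantzen_sum_dim_eq_padic_val_general (p : ℕ) (hp : p.Prime) {ι : Type*} [Fintype ι]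
    [DecidableEq ι]
    (B : (ι → ℤ) →ₗ[ℤ] (ι → ℤ) →ₗ[ℤ] ℤ)
    (G : Matrix ι ι ℤ) (hG : ∀ i j, G i j = B (Pi.single i 1) (Pi.single j 1))
    (hdet : G.det ≠ 0) :
    ∑' k : ℕ, Module.finrank (ZMod p)
        (Submodule.span (ZMod p)
          ((fun m : ι → ℤ => fun i => ((m i : ℤ) : ZMod p)) ''
            {m : ι → ℤ | ∀ v : ι → ℤ, (p : ℤ) ^ (k + 1) ∣ B m v})) =
      padicValInt p G.det := by
  have := Fact.mk hp
  have hBG : LinearMap.toMatrix₂' ℤ B = G := Matrix.ext fun i j => (hG i j).symm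
  obtain ⟨e, f, a, hgef⟩ := (toLin' Gᵀ).exists_basis_apply_eq_smul_basis (Pi.basisFun ℤ ι)
    (mulVec_injective_of_det_ne_zero (by rwa [det_transpose]))
  have hdetG : Associated G.det (∏ i, a i) := by
    simpa [LinearMap.det_toLin'] using LinearMap.associated_det_prod_of_apply_eq_smul hgef
  have ha : ∀ i, a i ≠ 0 := fun i =>
    prod_ne_zero_iff.1 (hdetG.ne_zero_iff.1 hdet) i (mem_univ i)
  have hJ : ∀ n, {m | ∀ v, (p : ℤ) ^ n ∣ B m v} = {m | ∀ i, (p : ℤ) ^ n ∣ a i * e.repr m i} :=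
      fun n => Set.ext fun m => by
    change (∀ v, _) ↔ ∀ i, _
    simp only [B.apply_apply_eq_transpose_mulVec_dotProduct, hBG, ← toLin'_apply,
      forall_dvd_dotProduct_iff]
    rw [← f.forall_dvd_repr_iff_forall_dvd_apply]
    simp only [LinearMap.repr_apply_eq_mul_repr_of_apply_eq_smul hgef]
  calc _ = ∑' k : ℕ, #{i | k < padicValInt p (a i)} := tsum_congr fun k => by
          rw [← coe_reduceMod, hJ, finrank_span_reduceMod_setOf_forall_dvd]
          simp only [padicValInt_dvd_iff, ha, false_or, Nat.succ_le_iff]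
    _ = ∑ i, padicValInt p (a i) := tsum_card_filter_lt _
    _ = padicValInt p G.det := by
      rw [padicValInt_eq_of_associated hdetG, padicValInt_prod _ _ fun i _ => ha i]

/-- Jantzen's lemma over ℤ: let M = ℤ^ι carry a non-degenerate symmetric bilinear form B with
Gram matrix G, let J_k(M) = {m : ⟨m,u⟩ ∈ p^kℤ ∀ u} and let J_k(M_{𝔽_p}) be the image of
J_k(M) in M ⊗ 𝔽_p.  Then Σ_{k>0} dim J_k(M_{𝔽_p}) = ν_p(det G). -/
theorem jantzen_sum_dim_eq_padic_val (p : ℕ) (hp : p.Prime) {ι : Type*} [Fintype ι]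
    [DecidableEq ι]
    (B : (ι → ℤ) →ₗ[ℤ] (ι → ℤ) →ₗ[ℤ] ℤ)
    (hsymm : ∀ m u, B m u = B u m)
    (G : Matrix ι ι ℤ) (hG : ∀ i j, G i j = B (Pi.single i 1) (Pi.single j 1))
    (hdet : G.det ≠ 0) :
    ∑' k : ℕ, Module.finrank (ZMod p)
        (Submodule.span (ZMod p)
          ((fun m : ι → ℤ => fun i => ((m i : ℤ) : ZMod p)) ''
            {m : ι → ℤ | ∀ v : ι → ℤ, (p : ℤ) ^ (k + 1) ∣ B m v})) =
      padicValInt p G.det :=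
  jantzen_sum_dim_eq_padic_val_general p hp B G hG hdet
end

section
/- Let λ be a partition, n ≥ L(λ), and suppose μ is obtained from λ by removing a rim hook R of length h whose topmost cell lies in row a and whose leg length is l (the number of rows of R minus one). Then with beta numbers β_r^λ = λ_r + n − r and β_r^μ = μ_r + n − r, we have β_r^μ = β_{r+1}^λ for a ≤ r < a + l, β_{a+l}^μ = β_a^λ − h, and β_r^μ = β_r^λ for all other r. -/
/-- The set of cells (0-indexed) of the Young diagram of a partition `l : ℕ → ℕ`. -/
def cellsOf (l : ℕ → ℕ) : Set (ℕ × ℕ) := {p | p.2 < l p.1}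

/-- `l` is (the part function of) a partition of length at most `n`. -/
def IsPartitionUpTo (l : ℕ → ℕ) (n : ℕ) : Prop :=
  (∀ i, l (i + 1) ≤ l i) ∧ ∀ i, n ≤ i → l i = 0

/-- The beta numbers of `l` (0-indexed): β_r = l r + (n − 1 − r) for r = 0, …, n−1. -/
def betaN (l : ℕ → ℕ) (n r : ℕ) : ℕ := l r + (n - 1 - r)

/-- The rim hook of `l` at the cell α = (a, b) ∈ l (0-indexed):
R_α = {(c,d) ∈ l : a ≤ c ≤ λ'_b − 1, b ≤ d ≤ λ_a − 1, (c+1, d+1) ∉ l}, where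
`conj` = λ'_b is the length of column b. -/
def rimHookAt (l : ℕ → ℕ) (n a b : ℕ) : Set (ℕ × ℕ) :=
  {p | a ≤ p.1 ∧ p.1 < ((Finset.range n).filter fun r => b < l r).card ∧
       b ≤ p.2 ∧ p.2 < l a ∧ p.2 < l p.1 ∧ ¬ (p.2 + 1 < l (p.1 + 1))}

/-!
Row `r` of the rim hook at `(a, b)` is the interval `[max b (λ_{r+1} - 1), λ_r)` for
`a ≤ r < λ'_b` and empty otherwise. Removing it therefore shortens row `r` to `λ_{r+1} - 1`
for `a ≤ r < λ'_b - 1` and the last row `λ'_b - 1` to `b`, which shifts the beta numbers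
`β_{a+1}, …, β_{λ'_b - 1}` down by one place. Summing the row lengths telescopes to the
hook length `(λ_a - b) + (λ'_b - 1 - a)`.
-/

open Finset

lemma filter_range_eq_range_card {p : ℕ → Prop} [DecidablePred p]
    (hp : ∀ i, p (i + 1) → p i) (n : ℕ) :
    (range n).filter p = range ((range n).filter p).card := by
  induction n with
  | zero => simp
  | succ n ih =>
    by_cases hpn : p n
    · have hanti : Antitone p := antitone_nat_of_succ_le hp
      rw [filter_true_of_mem fun i hi => hanti (Nat.le_of_lt_succ (mem_range.mp hi)) hpn,
        card_range]
    · rwa [range_add_one, filter_insert, if_neg hpn]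

lemma sum_Ico_tsub_succ_of_antitone {f : ℕ → ℕ} (hf : Antitone f) {a k : ℕ} (hak : a ≤ k) :
    ∑ r ∈ Ico a k, (f r - f (r + 1)) = f a - f k := by
  induction k, hak using Nat.le_induction with
  | base => simp
  | succ k hak ih =>
    rw [sum_Ico_succ_top hak, ih]
    have : f k ≤ f a := hf hak
    have : f (k + 1) ≤ f k := hf k.le_succ
    omega

lemma cellsOf_row_eq_min {l m : ℕ → ℕ} {S : Set (ℕ × ℕ)} (hμ : cellsOf m = cellsOf l \ S)
    {r lo : ℕ} (hS : ∀ d, (r, d) ∈ S ↔ lo ≤ d ∧ d < l r) : m r = min lo (l r) := by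
  refine eq_of_forall_lt_iff fun d => ?_
  have := Set.ext_iff.mp hμ (r, d)
  simp only [cellsOf, Set.mem_sdiff, Set.mem_ofPred_eq, hS] at this
  rw [this, lt_min_iff]
  omega

/-- The length `λ'_b` of column `b`. -/
def colLen (l : ℕ → ℕ) (n b : ℕ) : ℕ := ((range n).filter fun r => b < l r).card

lemma colLen_le (l : ℕ → ℕ) (n b : ℕ) : colLen l n b ≤ n :=
  (card_filter_le _ _).trans_eq (card_range n)

namespace IsPartitionUpTo

variable {l m : ℕ → ℕ} {n a b : ℕ}

lemma antitone (hl : IsPartitionUpTo l n) : Antitone l := antitone_nat_of_succ_le hl.1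

lemma lt_colLen_iff (hl : IsPartitionUpTo l n) {r : ℕ} : r < colLen l n b ↔ b < l r := by
  have hrange := filter_range_eq_range_card (p := fun r => b < l r)
    (fun i hi => hi.trans_le (hl.1 i)) n
  rw [colLen, ← mem_range, ← hrange, mem_filter, mem_range, and_iff_right_iff_imp]
  intro hbr
  by_contra! hnr
  rw [hl.2 r hnr] at hbr
  exact Nat.not_lt_zero b hbr

lemma mem_rimHookAt_iff (hl : IsPartitionUpTo l n) {r d : ℕ} :
    (r, d) ∈ rimHookAt l n a b ↔
      a ≤ r ∧ r < colLen l n b ∧ max b (l (r + 1) - 1) ≤ d ∧ d < l r := by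
  change a ≤ r ∧ r < colLen l n b ∧ b ≤ d ∧ d < l a ∧ d < l r ∧ ¬ d + 1 < l (r + 1) ↔ _
  constructor
  · rintro ⟨har, hrc, hbd, -, hdr, hd⟩
    exact ⟨har, hrc, by omega, hdr⟩
  · rintro ⟨har, hrc, hd, hdr⟩
    have := hl.antitone har
    exact ⟨har, hrc, by omega, by omega, hdr, by omega⟩

lemma rimHookAt_eq_biUnion (hl : IsPartitionUpTo l n) :
    rimHookAt l n a b =
      ↑((Ico a (colLen l n b)).biUnion fun r => {r} ×ˢ Ico (max b (l (r + 1) - 1)) (l r)) := by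
  ext ⟨r, d⟩
  simp only [hl.mem_rimHookAt_iff, coe_biUnion, coe_product, coe_singleton, coe_Ico,
    Set.mem_iUnion, Set.mem_prod, Set.mem_singleton_iff, Set.mem_Ico, exists_prop]
  constructor
  · rintro ⟨har, hrc, hd⟩
    exact ⟨r, ⟨har, hrc⟩, rfl, hd⟩
  · rintro ⟨r, hr, rfl, hd⟩
    exact ⟨hr.1, hr.2, hd⟩

lemma ncard_rimHookAt (hl : IsPartitionUpTo l n) (hab : b < l a) :
    (rimHookAt l n a b).ncard = (l a - b) + (colLen l n b - 1 - a) := by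
  have hac : a < colLen l n b := hl.lt_colLen_iff.mpr hab
  have hdisj : (Ico a (colLen l n b) : Set ℕ).PairwiseDisjoint
      fun r => {r} ×ˢ Ico (max b (l (r + 1) - 1)) (l r) := fun x _ y _ hxy =>
    disjoint_product.mpr (Or.inl (disjoint_singleton.mpr hxy))
  rw [hl.rimHookAt_eq_biUnion, Set.ncard_coe_finset, card_biUnion hdisj]
  simp only [card_product, card_singleton, Nat.card_Ico, one_mul]
  obtain ⟨k, hk⟩ : ∃ k, colLen l n b = k + 1 := ⟨colLen l n b - 1, by omega⟩
  rw [hk]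
  have hmiddle : ∀ r ∈ Ico a k, l r - max b (l (r + 1) - 1) = (l r - l (r + 1)) + 1 := by
    intro r hr
    have : b < l (r + 1) := hl.lt_colLen_iff.mp (by have := mem_Ico.mp hr; omega)
    have := hl.1 r
    omega
  have hlast : l (k + 1) ≤ b := not_lt.mp (hl.lt_colLen_iff.not.mp (by omega))
  have hbk : b < l k := hl.lt_colLen_iff.mp (by omega)
  have hka : l k ≤ l a := hl.antitone (by omega)
  rw [sum_Ico_succ_top (by omega), sum_congr rfl hmiddle, sum_add_distrib,
    sum_Ico_tsub_succ_of_antitone hl.antitone (by omega), sum_const, Nat.card_Ico, smul_eq_mul,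
    mul_one]
  omega

section removal

variable (hl : IsPartitionUpTo l n) (hμ : cellsOf m = cellsOf l \ rimHookAt l n a b)
include hl hμ

lemma rimHookRemoved_eq_of_lt_or_colLen_le {r : ℕ} (hr : r < a ∨ colLen l n b ≤ r) :
    m r = l r := by
  rw [cellsOf_row_eq_min hμ (lo := l r) fun d => by rw [hl.mem_rimHookAt_iff]; omega, min_self]

lemma rimHookRemoved_eq_of_succ_lt_colLen {r : ℕ} (har : a ≤ r) (hrc : r + 1 < colLen l n b) :
    m r = l (r + 1) - 1 := by
  have hb : b < l (r + 1) := hl.lt_colLen_iff.mp hrc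
  have := hl.1 r
  rw [cellsOf_row_eq_min hμ (lo := l (r + 1) - 1) fun d => by rw [hl.mem_rimHookAt_iff]; omega]
  omega

lemma rimHookRemoved_colLen_sub_one (hac : a < colLen l n b) : m (colLen l n b - 1) = b := by
  have hb : b < l (colLen l n b - 1) := hl.lt_colLen_iff.mp (by omega)
  have hlast : l (colLen l n b - 1 + 1) ≤ b := not_lt.mp (hl.lt_colLen_iff.not.mp (by omega))
  rw [cellsOf_row_eq_min hμ (lo := b) fun d => by rw [hl.mem_rimHookAt_iff]; omega]
  omega

end removal

end IsPartitionUpTo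

theorem rim_hook_removal_beta_numbers_general (n : ℕ) (l m : ℕ → ℕ)
    (hl : IsPartitionUpTo l n)
    (a b : ℕ) (hab : b < l a)
    (conj leg h : ℕ)
    (hconj : conj = ((Finset.range n).filter fun r => b < l r).card)
    (hleg : leg = conj - 1 - a)
    (hh : h = (rimHookAt l n a b).ncard)
    (hμ : cellsOf m = cellsOf l \ rimHookAt l n a b) :
    (∀ r, a ≤ r → r < a + leg → betaN m n r = betaN l n (r + 1)) ∧
    betaN m n (a + leg) = betaN l n a - h ∧
    (∀ r, r < a ∨ a + leg < r → betaN m n r = betaN l n r) := by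
  change conj = colLen l n b at hconj
  subst hconj
  have hac : a < colLen l n b := hl.lt_colLen_iff.mpr hab
  have hcn : colLen l n b ≤ n := colLen_le l n b
  have hlast : a + leg = colLen l n b - 1 := by omega
  refine ⟨fun r har hr => ?_, ?_, fun r hr => ?_⟩
  · have hb : b < l (r + 1) := hl.lt_colLen_iff.mp (by omega)
    rw [betaN, betaN, hl.rimHookRemoved_eq_of_succ_lt_colLen hμ har (by omega)]
    omega
  · rw [betaN, betaN, hlast, hl.rimHookRemoved_colLen_sub_one hμ hac, hh,
      hl.ncard_rimHookAt hab]
    omega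
  · rw [betaN, betaN, hl.rimHookRemoved_eq_of_lt_or_colLen_le hμ (by omega)]

/-- Removing the rim hook R_α at α = (a, b) (with hook length h = |R_α| and leg length
leg = λ'_b − 1 − a) from λ replaces the beta numbers as follows: β^μ_r = β^λ_{r+1} for
a ≤ r < a + leg, β^μ_{a+leg} = β^λ_a − h, and β^μ_r = β^λ_r for all other r. -/
theorem rim_hook_removal_beta_numbers (n : ℕ) (hn : 1 ≤ n) (l m : ℕ → ℕ)
    (hl : IsPartitionUpTo l n) (hm : IsPartitionUpTo m n)
    (a b : ℕ) (hab : b < l a)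
    (conj leg h : ℕ)
    (hconj : conj = ((Finset.range n).filter fun r => b < l r).card)
    (hleg : leg = conj - 1 - a)
    (hh : h = (rimHookAt l n a b).ncard)
    (hμ : cellsOf m = cellsOf l \ rimHookAt l n a b) :
    (∀ r, a ≤ r → r < a + leg → betaN m n r = betaN l n (r + 1)) ∧
    betaN m n (a + leg) = betaN l n a - h ∧
    (∀ r, r < a ∨ a + leg < r → betaN m n r = betaN l n r) :=
  rim_hook_removal_beta_numbers_general n l m hl a b hab conj leg h hconj hleg hh hμ
end

section
/- Let A be a cellular algebra over a field F with cell datum (𝒫, T, C), and for λ ∈ 𝒫 let D^λ = C^λ / rad C^λ. If μ ∈ 𝒫 satisfies D^μ ≠ 0, then the composition multiplicity [C^μ : D^μ] = 1, and for any λ ∈ 𝒫, [C^λ : D^μ] ≠ 0 implies λ ≥ μ in the poset order. -/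
/-!
The cellular relations make each cellular basis element act on a cell module with rank one:
`c p s t • x = form p x (bas p t) • bas p s`. Hence every `c μ s t` kills `rad μ`, and a submodule
of `M μ` not contained in `rad μ` contains every `bas μ s`; so `rad μ` is the unique maximal
submodule. In a composition series of `M μ` the top factor is therefore `M μ ⧸ rad μ`, while every
other factor lies inside `rad μ` and is killed by some `c μ s t` that acts nontrivially on
`M μ ⧸ rad μ`. If `μ ≰ λ`, that same `c μ s t` kills all of `M λ`, because the span of the cells
above `μ` is a two-sided ideal; so `M μ ⧸ rad μ` is not a subquotient of `M λ`.
-/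

open Module

section CompositionSeries

variable {X : Type*} [Lattice X] [IsModularLattice X] [OrderTop X]

theorem CompositionSeries.le_of_succ_ne_last {K : X} (hmax : ∀ N, N ≤ K ∨ N = ⊤)
    (s : CompositionSeries X) (hlast : s.last = ⊤) {i : Fin s.length}
    (hi : i.succ ≠ Fin.last s.length) : s i.succ ≤ K :=
  (hmax _).resolve_right fun h => hi (s.injective (h.trans hlast.symm))

theorem CompositionSeries.eq_of_succ_eq_last {K : X} (hK : K ≠ ⊤) (hmax : ∀ N, N ≤ K ∨ N = ⊤)
    (s : CompositionSeries X) (hlast : s.last = ⊤) {i : Fin s.length}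
    (hi : i.succ = Fin.last s.length) : s i.castSucc = K := by
  have hcov : s i.castSucc ⋖ ⊤ := by
    rw [← hlast, RelSeries.last, ← hi]
    exact s.step i
  have hle : s i.castSucc ≤ K := (hmax _).resolve_right hcov.lt.ne
  exact hle.eq_of_not_lt fun hlt => hcov.2 hlt hK.lt_top

end CompositionSeries

theorem Fin.card_succ_eq_last {n : ℕ} (hn : n ≠ 0) :
    Nat.card {i : Fin n // i.succ = Fin.last n} = 1 := by
  obtain ⟨i₀, hi₀⟩ := (Fin.exists_succ_eq (x := Fin.last n)).2 fun h =>
    hn (by simpa using congrArg Fin.val h)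
  exact Nat.card_eq_one_iff_exists.2
    ⟨⟨i₀, hi₀⟩, fun i => Subtype.ext (Fin.succ_injective _ (i.2.trans hi₀.symm))⟩

namespace Submodule

variable {R M : Type*} [Ring R] [AddCommGroup M] [Module R M]

theorem annihilator_le_annihilator_subquotient (N₁ N₂ : Submodule R M) :
    N₂.annihilator ≤ Module.annihilator R (N₂ ⧸ N₁.comap N₂.subtype) :=
  (N₁.comap N₂.subtype).mkQ.annihilator_le_of_surjective (mkQ_surjective _)

def topQuotEquivQuot (N : Submodule R M) :
    ((⊤ : Submodule R M) ⧸ N.comap (⊤ : Submodule R M).subtype) ≃ₗ[R] M ⧸ N :=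
  Quotient.equiv _ _ topEquiv (by ext x; simp)

theorem nonempty_compositionSeries_factor_equiv_iff {K : Submodule R M} (hK : K ≠ ⊤)
    (hmax : ∀ N, N ≤ K ∨ N = ⊤) (hsep : ¬ K.annihilator ≤ Module.annihilator R (M ⧸ K))
    (s : CompositionSeries (Submodule R M)) (hlast : s.last = ⊤) (i : Fin s.length) :
    Nonempty ((↥(s i.succ) ⧸ (s i.castSucc).comap (s i.succ).subtype) ≃ₗ[R] M ⧸ K) ↔
      i.succ = Fin.last s.length := by
  refine ⟨fun ⟨e⟩ => ?_, fun hi => ?_⟩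
  · by_contra hi
    refine hsep ((annihilator_mono (s.le_of_succ_ne_last hmax hlast hi)).trans ?_)
    rw [← e.annihilator_eq]
    exact annihilator_le_annihilator_subquotient _ _
  · rw [s.eq_of_succ_eq_last hK hmax hlast hi, show s i.succ = ⊤ from hi ▸ hlast]
    exact ⟨topQuotEquivQuot K⟩

theorem card_compositionSeries_factor_equiv_eq_one {K : Submodule R M} (hK : K ≠ ⊤)
    (hmax : ∀ N, N ≤ K ∨ N = ⊤) (hsep : ¬ K.annihilator ≤ Module.annihilator R (M ⧸ K))
    (s : CompositionSeries (Submodule R M)) (hhead : s.head = ⊥) (hlast : s.last = ⊤) :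
    Nat.card {i : Fin s.length //
      Nonempty ((↥(s i.succ) ⧸ (s i.castSucc).comap (s i.succ).subtype) ≃ₗ[R] M ⧸ K)} = 1 := by
  have hlen : s.length ≠ 0 := by
    intro h
    have h0 : s.head = s.last := congrArg s (Fin.ext (by simp [h]))
    rw [hhead, hlast] at h0
    exact hK (top_unique (h0 ▸ bot_le))
  simp_rw [nonempty_compositionSeries_factor_equiv_iff hK hmax hsep s hlast]
  exact Fin.card_succ_eq_last hlen

end Submodule

theorem Submodule.eq_top_of_basis_mem {ι F A M : Type*} [CommSemiring F] [Semiring A]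
    [Algebra F A] [AddCommMonoid M] [Module A M] [Module F M] [IsScalarTower F A M]
    (bas : Basis ι F M) {N : Submodule A M} (h : ∀ i, bas i ∈ N) : N = ⊤ := by
  have : Submodule.span F (Set.range bas) ≤ N.restrictScalars F :=
    Submodule.span_le.2 (Set.range_subset_iff.2 h)
  rw [bas.span_eq] at this
  exact eq_top_iff.2 fun x _ => this trivial

theorem Module.Basis.exists_apply_ne_zero {ι R M N : Type*} [Semiring R] [AddCommMonoid M]
    [Module R M] [AddCommMonoid N] [Module R N] (bas : Basis ι R M) {f : M →ₗ[R] N}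
    (hf : f ≠ 0) : ∃ i, f (bas i) ≠ 0 := by
  by_contra! h
  exact hf (bas.ext fun i => by simpa using h i)

section CellularAlgebra

variable {F A P : Type*} [CommRing F] [Ring A] [Algebra F A] {T : P → Type*}
  {c : ∀ p, T p → T p → A} {b : Basis ((p : P) × (T p × T p)) F A}

variable (F) in
/-- For `S = Set.Ioi p` this is the ideal `A^{>p}` of the paper. -/
def cellSpan (c : ∀ p, T p → T p → A) (S : Set P) : Submodule F A :=
  Submodule.span F {x | ∃ q ∈ S, ∃ u v : T q, x = c q u v}

theorem cell_mem_cellSpan {S : Set P} {q : P} (hq : q ∈ S) (u v : T q) :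
    c q u v ∈ cellSpan F c S :=
  Submodule.subset_span ⟨q, hq, u, v, rfl⟩

theorem cellSpan_mono {S S' : Set P} (h : S ⊆ S') : cellSpan F c S ≤ cellSpan F c S' :=
  Submodule.span_mono fun _ ⟨q, hq, u, v, hx⟩ => ⟨q, h hq, u, v, hx⟩

theorem repr_eq_zero_of_mem_cellSpan (hb : ∀ p s t, b ⟨p, (s, t)⟩ = c p s t) {S : Set P}
    {y : A} (hy : y ∈ cellSpan F c S) {p : P} (hp : p ∉ S) (i : T p × T p) :
    b.repr y ⟨p, i⟩ = 0 := by
  have hsub : cellSpan F c S ≤ Submodule.span F (b '' {j | j.1 ∈ S}) :=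
    Submodule.span_mono fun _ ⟨q, hq, u, v, hx⟩ => ⟨⟨q, (u, v)⟩, hq, (hb q u v).trans hx.symm⟩
  by_contra h
  exact hp (b.mem_span_image.1 (hsub hy) (Finsupp.mem_support_iff.2 h))

theorem map_cellSpan_le {τ : A →ₗ[F] A} (hτc : ∀ p s t, τ (c p s t) = c p t s) (S : Set P) :
    (cellSpan F c S).map τ ≤ cellSpan F c S := by
  rw [cellSpan, Submodule.map_span_le]
  rintro _ ⟨q, hq, u, v, rfl⟩
  exact hτc q u v ▸ cell_mem_cellSpan hq v u

theorem involutive_of_map_cell (hb : ∀ p s t, b ⟨p, (s, t)⟩ = c p s t) {τ : A →ₗ[F] A}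
    (hτc : ∀ p s t, τ (c p s t) = c p t s) : Function.Involutive τ := by
  have : τ ∘ₗ τ = LinearMap.id := b.ext fun ⟨p, s, t⟩ => by simp [hb, hτc]
  exact LinearMap.congr_fun this

theorem repr_sum_smul_cell (hb : ∀ p s t, b ⟨p, (s, t)⟩ = c p s t) (p : P) [Fintype (T p)]
    (u : T p) (f : T p → F) (w : T p) : b.repr (∑ v, f v • c p u v) ⟨p, (u, w)⟩ = f w := by
  classical
  simp [← hb, Finsupp.single_apply]

variable [Preorder P]

theorem repr_eq_of_sub_mem_cellSpan_Ioi (hb : ∀ p s t, b ⟨p, (s, t)⟩ = c p s t) {p : P}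
    {y z : A} (h : y - z ∈ cellSpan F c (Set.Ioi p)) (i : T p × T p) :
    b.repr y ⟨p, i⟩ = b.repr z ⟨p, i⟩ := by
  have := repr_eq_zero_of_mem_cellSpan hb h (lt_irrefl p) i
  rwa [map_sub, Finsupp.sub_apply, sub_eq_zero] at this

variable [∀ p, Fintype (T p)] {r : ∀ p : P, A → T p → T p → F}

theorem coeff_eq_repr_cell_mul (hb : ∀ p s t, b ⟨p, (s, t)⟩ = c p s t) {p : P}
    (hmul : ∀ s t a, c p s t * a - ∑ v, r p a t v • c p s v ∈ cellSpan F c (Set.Ioi p))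
    (a : A) (s t w : T p) : r p a t w = b.repr (c p s t * a) ⟨p, (s, w)⟩ := by
  rw [repr_eq_of_sub_mem_cellSpan_Ioi hb (hmul s t a), repr_sum_smul_cell hb]

theorem cell_mul_mem_cellSpan_Ici {μ : P}
    (hmul : ∀ s t a, c μ s t * a - ∑ v, r μ a t v • c μ s v ∈ cellSpan F c (Set.Ioi μ))
    (s t : T μ) (a : A) : c μ s t * a ∈ cellSpan F c (Set.Ici μ) := by
  rw [← sub_add_cancel (c μ s t * a) (∑ v, r μ a t v • c μ s v)]
  exact add_mem (cellSpan_mono Set.Ioi_subset_Ici_self (hmul s t a))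
    (sum_mem fun v _ => Submodule.smul_mem _ _ (cell_mem_cellSpan (le_refl μ) s v))

theorem mul_cell_mem_cellSpan_Ici (hb : ∀ p s t, b ⟨p, (s, t)⟩ = c p s t) {τ : A →ₗ[F] A}
    (hτmul : ∀ a a', τ (a * a') = τ a' * τ a) (hτc : ∀ p s t, τ (c p s t) = c p t s) {μ : P}
    (hmul : ∀ s t a, c μ s t * a - ∑ v, r μ a t v • c μ s v ∈ cellSpan F c (Set.Ioi μ))
    (s t : T μ) (a : A) : a * c μ t s ∈ cellSpan F c (Set.Ici μ) := by
  rw [← involutive_of_map_cell hb hτc (a * c μ t s), hτmul, hτc]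
  exact map_cellSpan_le hτc _ (Submodule.mem_map_of_mem (cell_mul_mem_cellSpan_Ici hmul s t _))

section CellModule

variable {M : Type*} [AddCommGroup M] [Module A M] [Module F M] {τ : A →ₗ[F] A}

theorem cell_smul_basis (hb : ∀ p s t, b ⟨p, (s, t)⟩ = c p s t)
    (hτc : ∀ p s t, τ (c p s t) = c p t s) {p : P}
    (hmul : ∀ s t a, c p s t * a - ∑ v, r p a t v • c p s v ∈ cellSpan F c (Set.Ioi p))
    {bas : Basis (T p) F M} (haction : ∀ a t, a • bas t = ∑ v, r p (τ a) t v • bas v)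
    {form : M →ₗ[F] M →ₗ[F] F}
    (hform : ∀ u s t v, c p u s * c p t v - form (bas s) (bas t) • c p u v ∈
      cellSpan F c (Set.Ioi p))
    (s t v : T p) : c p s t • bas v = form (bas v) (bas t) • bas s := by
  have hcoeff : ∀ w, r p (c p t s) v w = form (bas v) (bas t) * b.repr (c p v s) ⟨p, (v, w)⟩ :=
    fun w => by
      rw [coeff_eq_repr_cell_mul hb hmul _ v v, repr_eq_of_sub_mem_cellSpan_Ioi hb (hform v v t s),
        map_smul, Finsupp.smul_apply, smul_eq_mul]
  rw [haction, hτc, Fintype.sum_eq_single s fun w hw => ?_]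
  · rw [hcoeff, ← hb, b.repr_self, Finsupp.single_eq_same, mul_one]
  · rw [hcoeff, ← hb, b.repr_self, Finsupp.single_eq_of_ne (by simpa using hw), mul_zero,
      zero_smul]

theorem cell_smul_eq [IsScalarTower F A M] (hb : ∀ p s t, b ⟨p, (s, t)⟩ = c p s t)
    (hτc : ∀ p s t, τ (c p s t) = c p t s) {p : P}
    (hmul : ∀ s t a, c p s t * a - ∑ v, r p a t v • c p s v ∈ cellSpan F c (Set.Ioi p))
    {bas : Basis (T p) F M} (haction : ∀ a t, a • bas t = ∑ v, r p (τ a) t v • bas v)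
    {form : M →ₗ[F] M →ₗ[F] F}
    (hform : ∀ u s t v, c p u s * c p t v - form (bas s) (bas t) • c p u v ∈
      cellSpan F c (Set.Ioi p))
    (s t : T p) (x : M) : c p s t • x = form x (bas t) • bas s := by
  have : DistribSMul.toLinearMap F M (c p s t) = (form.flip (bas t)).smulRight (bas s) :=
    bas.ext fun v => cell_smul_basis hb hτc hmul haction hform s t v
  exact LinearMap.congr_fun this x

theorem cell_mem_annihilator_of_not_le [IsScalarTower F A M]
    (hb : ∀ p s t, b ⟨p, (s, t)⟩ = c p s t) (hτmul : ∀ a a', τ (a * a') = τ a' * τ a)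
    (hτc : ∀ p s t, τ (c p s t) = c p t s) {μ lam : P}
    (hmulμ : ∀ s t a, c μ s t * a - ∑ v, r μ a t v • c μ s v ∈ cellSpan F c (Set.Ioi μ))
    (hmulLam : ∀ s t a, c lam s t * a - ∑ v, r lam a t v • c lam s v ∈
      cellSpan F c (Set.Ioi lam))
    {bas : Basis (T lam) F M} (haction : ∀ a t, a • bas t = ∑ v, r lam (τ a) t v • bas v)
    (hle : ¬ μ ≤ lam) (s t : T μ) : c μ s t ∈ Module.annihilator A M := by
  have hbasis : ∀ v, c μ s t • bas v = 0 := fun v => by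
    rw [haction, hτc]
    refine Finset.sum_eq_zero fun w _ => ?_
    rw [coeff_eq_repr_cell_mul hb hmulLam _ v v, repr_eq_zero_of_mem_cellSpan hb
      (mul_cell_mem_cellSpan_Ici hb hτmul hτc hmulμ s t _) hle, zero_smul]
  have : DistribSMul.toLinearMap F M (c μ s t) = 0 := bas.ext hbasis
  exact Module.mem_annihilator.2 (LinearMap.congr_fun this)

theorem cell_mem_annihilator_rad [IsScalarTower F A M] (hb : ∀ p s t, b ⟨p, (s, t)⟩ = c p s t)
    (hτc : ∀ p s t, τ (c p s t) = c p t s) {p : P}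
    (hmul : ∀ s t a, c p s t * a - ∑ v, r p a t v • c p s v ∈ cellSpan F c (Set.Ioi p))
    {bas : Basis (T p) F M} (haction : ∀ a t, a • bas t = ∑ v, r p (τ a) t v • bas v)
    {form : M →ₗ[F] M →ₗ[F] F}
    (hform : ∀ u s t v, c p u s * c p t v - form (bas s) (bas t) • c p u v ∈
      cellSpan F c (Set.Ioi p))
    {rad : Submodule A M} (hrad : ∀ x, x ∈ rad ↔ ∀ y, form x y = 0) (s t : T p) :
    c p s t ∈ rad.annihilator :=
  Submodule.mem_annihilator.2 fun x hx => by
    rw [cell_smul_eq hb hτc hmul haction hform, (hrad x).1 hx, zero_smul]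

end CellModule

end CellularAlgebra

section CellModuleOverField

variable {F A P : Type*} [Field F] [Ring A] [Algebra F A] [Preorder P] {T : P → Type*}
  [∀ p, Fintype (T p)] {c : ∀ p, T p → T p → A} {b : Basis ((p : P) × (T p × T p)) F A}
  {r : ∀ p : P, A → T p → T p → F} {M : Type*} [AddCommGroup M] [Module A M] [Module F M]
  [IsScalarTower F A M] {τ : A →ₗ[F] A} {p : P} {bas : Basis (T p) F M}
  {form : M →ₗ[F] M →ₗ[F] F} {rad : Submodule A M}

theorem le_rad_or_eq_top (hb : ∀ p s t, b ⟨p, (s, t)⟩ = c p s t)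
    (hτc : ∀ p s t, τ (c p s t) = c p t s)
    (hmul : ∀ s t a, c p s t * a - ∑ v, r p a t v • c p s v ∈ cellSpan F c (Set.Ioi p))
    (haction : ∀ a t, a • bas t = ∑ v, r p (τ a) t v • bas v)
    (hform : ∀ u s t v, c p u s * c p t v - form (bas s) (bas t) • c p u v ∈
      cellSpan F c (Set.Ioi p))
    (hrad : ∀ x, x ∈ rad ↔ ∀ y, form x y = 0) (N : Submodule A M) : N ≤ rad ∨ N = ⊤ := by
  refine or_iff_not_imp_left.2 fun hN => ?_
  obtain ⟨x, hxN, hxrad⟩ := SetLike.not_le_iff_exists.1 hN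
  obtain ⟨t, ht⟩ := bas.exists_apply_ne_zero (f := form x) fun h =>
    hxrad ((hrad x).2 fun y => by simp [h])
  refine Submodule.eq_top_of_basis_mem bas fun s => ?_
  have := N.smul_mem (c p s t) hxN
  rw [cell_smul_eq hb hτc hmul haction hform] at this
  exact (Submodule.smul_mem_iff (N.restrictScalars F) ht).1 this

theorem exists_cell_notMem_annihilator_quotient_rad (hb : ∀ p s t, b ⟨p, (s, t)⟩ = c p s t)
    (hτc : ∀ p s t, τ (c p s t) = c p t s)
    (hmul : ∀ s t a, c p s t * a - ∑ v, r p a t v • c p s v ∈ cellSpan F c (Set.Ioi p))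
    (haction : ∀ a t, a • bas t = ∑ v, r p (τ a) t v • bas v)
    (hform : ∀ u s t v, c p u s * c p t v - form (bas s) (bas t) • c p u v ∈
      cellSpan F c (Set.Ioi p))
    (hrad : ∀ x, x ∈ rad ↔ ∀ y, form x y = 0) (hD : rad ≠ ⊤) :
    ∃ s t, c p s t ∉ Module.annihilator A (M ⧸ rad) := by
  obtain ⟨s, hs⟩ : ∃ s, bas s ∉ rad :=
    not_forall.1 fun h => hD (Submodule.eq_top_of_basis_mem bas h)
  obtain ⟨t, ht⟩ := bas.exists_apply_ne_zero (f := form (bas s)) fun h =>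
    hs ((hrad _).2 fun y => by simp [h])
  refine ⟨s, t, fun hann => hs ?_⟩
  have := Module.mem_annihilator.1 hann (Submodule.Quotient.mk (bas s))
  rw [← Submodule.Quotient.mk_smul, Submodule.Quotient.mk_eq_zero,
    cell_smul_eq hb hτc hmul haction hform] at this
  exact (Submodule.smul_mem_iff (rad.restrictScalars F) ht).1 this

end CellModuleOverField

/-- For a cellular algebra A over a field F with cell datum (𝒫, T, C), cell modules M(p)
(with basis `bas p` indexed by T(p), cellular action rule and associative bilinear form), and
D(μ) = M(μ)/rad M(μ): if D(μ) ≠ 0 then every composition series of M(μ) has exactly one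
factor isomorphic to D(μ) (i.e. [C^μ : D^μ] = 1), and any λ for which D(μ) occurs as a
subquotient (composition factor) of M(λ) satisfies λ ≥ μ. -/
theorem cellular_decomposition_triangular
    {F A P : Type*} [Field F] [Ring A] [Algebra F A] [PartialOrder P]
    {T : P → Type*} [∀ p, Fintype (T p)]
    (c : ∀ p, T p → T p → A)
    (b : Module.Basis ((p : P) × (T p × T p)) F A)
    (hb : ∀ (p : P) (s t : T p), b ⟨p, (s, t)⟩ = c p s t)
    (τ : A →ₗ[F] A)
    (hτmul : ∀ a a' : A, τ (a * a') = τ a' * τ a)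
    (hτc : ∀ (p : P) (s t : T p), τ (c p s t) = c p t s)
    (r : ∀ p : P, A → T p → T p → F)
    (hmul : ∀ (p : P) (s t : T p) (a : A),
      c p s t * a - ∑ v, r p a t v • c p s v ∈
        Submodule.span F {x : A | ∃ q, p < q ∧ ∃ u v : T q, x = c q u v})
    (M : P → Type*) [∀ p, AddCommGroup (M p)] [∀ p, Module A (M p)]
    [∀ p, Module F (M p)] [∀ p, IsScalarTower F A (M p)]
    (bas : ∀ p, Module.Basis (T p) F (M p))
    (haction : ∀ (p : P) (a : A) (t : T p),
      a • bas p t = ∑ v, r p (τ a) t v • bas p v)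
    (form : ∀ p, M p →ₗ[F] M p →ₗ[F] F)
    (hform : ∀ (p : P) (u s t v : T p),
      c p u s * c p t v - (form p (bas p s) (bas p t)) • c p u v ∈
        Submodule.span F {x : A | ∃ q, p < q ∧ ∃ u' v' : T q, x = c q u' v'})
    (rad : ∀ p, Submodule A (M p))
    (hrad : ∀ (p : P) (x : M p), x ∈ rad p ↔ ∀ y, form p x y = 0)
    (μ : P) (hD : rad μ ≠ ⊤) :
    (∀ s : CompositionSeries (Submodule A (M μ)), s.head = ⊥ → s.last = ⊤ →
      Nat.card {i : Fin s.length //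
        Nonempty ((↥(s i.succ) ⧸ Submodule.comap (s i.succ).subtype (s i.castSucc)) ≃ₗ[A]
          (M μ ⧸ rad μ))} = 1) ∧
    (∀ lam : P, ∀ N₁ N₂ : Submodule A (M lam), N₁ ≤ N₂ →
      Nonempty ((↥N₂ ⧸ Submodule.comap N₂.subtype N₁) ≃ₗ[A] (M μ ⧸ rad μ)) → μ ≤ lam) := by
  obtain ⟨s₀, t₀, hsep⟩ := exists_cell_notMem_annihilator_quotient_rad hb hτc (hmul μ)
    (haction μ) (hform μ) (hrad μ) hD
  refine ⟨fun s hhead hlast => ?_, fun lam N₁ N₂ _ ⟨e⟩ => ?_⟩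
  · refine Submodule.card_compositionSeries_factor_equiv_eq_one hD
      (le_rad_or_eq_top hb hτc (hmul μ) (haction μ) (hform μ) (hrad μ)) (fun h => hsep (h ?_))
      s hhead hlast
    exact cell_mem_annihilator_rad hb hτc (hmul μ) (haction μ) (hform μ) (hrad μ) s₀ t₀
  · by_contra hle
    have hann : c μ s₀ t₀ ∈ Module.annihilator A (M lam) :=
      cell_mem_annihilator_of_not_le hb hτmul hτc (hmul μ) (hmul lam) (haction lam) hle s₀ t₀
    apply hsep
    rw [← e.annihilator_eq]
    exact Submodule.annihilator_le_annihilator_subquotient N₁ N₂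
      (N₂.subtype.annihilator_le_of_injective N₂.injective_subtype hann)
end

section
/- Let Γ_e be the cyclic quiver with vertex set I = ℤ/eℤ (e ≥ 2) and Cartan pairing (α_i, α_j) = 2δ_{ij} − δ_{i,j+1} − δ_{i,j−1} (with the convention (α_i,α_j) = 2δ_{ij} − 2δ_{i,j+1} when e = 2). For λ an ℓ-partition with multicharge κ and a standard tableau t with t = s·(r, r+1) for a standard tableau s, writing i_r, i_{r+1} ∈ I for the residues of r and r+1 in t, the Brundan–Kleshchev–Wang degree satisfies deg(t) = deg(s) − (α_{i_r}, α_{i_{r+1}}). -/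
/-- Nodes of an ℓ-multipartition: (component, row, column), all 0-indexed except the
component which is a `Fin ℓ`. -/
abbrev MNode (ℓ : ℕ) := Fin ℓ × ℕ × ℕ

/-- The shape after the first `k` steps of a chain of node additions: the (l, r) part counts
how many of the first `k` added nodes lie in component l, row r. -/
def shapeOf {ℓ : ℕ} (A : ℕ → MNode ℓ) (k : ℕ) : Fin ℓ → ℕ → ℕ := fun l r =>
  ((Finset.range k).filter fun j => (A j).1 = l ∧ (A j).2.1 = r).card

/-- The residue (mod e) of a node, for the multicharge κ : res(l, r, c) = κ_l + c − r. -/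
def resN (e : ℕ) {ℓ : ℕ} (κ : Fin ℓ → ℤ) (N : MNode ℓ) : ZMod e :=
  ((κ N.1 + (N.2.2 : ℤ) - (N.2.1 : ℤ) : ℤ) : ZMod e)

/-- N = (l, r, c) is an addable node of the multipartition μ. -/
def AddableNode {ℓ : ℕ} (μ : Fin ℓ → ℕ → ℕ) (N : MNode ℓ) : Prop :=
  N.2.2 = μ N.1 N.2.1 ∧ (N.2.1 = 0 ∨ μ N.1 N.2.1 < μ N.1 (N.2.1 - 1))

/-- N = (l, r, c) is a removable node of the multipartition μ. -/
def RemovableNode {ℓ : ℕ} (μ : Fin ℓ → ℕ → ℕ) (N : MNode ℓ) : Prop :=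
  N.2.2 + 1 = μ N.1 N.2.1 ∧ μ N.1 (N.2.1 + 1) ≤ N.2.2

/-- The fixed total (lexicographic) order on nodes. -/
def nodeLt {ℓ : ℕ} (a b : MNode ℓ) : Prop :=
  a.1 < b.1 ∨ (a.1 = b.1 ∧ (a.2.1 < b.2.1 ∨ (a.2.1 = b.2.1 ∧ a.2.2 < b.2.2)))

/-- d_A(μ) = #{addable nodes of μ of the same residue as A that are > A}
           − #{removable nodes of μ of the same residue as A that are > A}. -/
noncomputable def dA (e : ℕ) {ℓ : ℕ} (κ : Fin ℓ → ℤ) (μ : Fin ℓ → ℕ → ℕ) (N : MNode ℓ) : ℤ :=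
  ({B : MNode ℓ | AddableNode μ B ∧ resN e κ B = resN e κ N ∧ nodeLt N B}.ncard : ℤ) -
    ({B : MNode ℓ | RemovableNode μ B ∧ resN e κ B = resN e κ N ∧ nodeLt N B}.ncard : ℤ)

/-- The Brundan–Kleshchev–Wang degree of a standard tableau, encoded as the chain of nodes
A 0, A 1, …, A (n−1) added one at a time: deg = Σ_k d_{A k}(shape after step k+1). -/
noncomputable def degBKW (e : ℕ) {ℓ : ℕ} (κ : Fin ℓ → ℤ) (A : ℕ → MNode ℓ) (n : ℕ) : ℤ :=
  ∑ k ∈ Finset.range n, dA e κ (shapeOf A (k + 1)) (A k)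

/-- The Cartan pairing (α_i, α_j) = 2δ_{ij} − δ_{i,j+1} − δ_{i,j−1} for the cyclic quiver
with vertex set ℤ/eℤ (for e = 2 this gives 2δ_{ij} − 2δ_{i,j+1}). -/
def cartanPairing (e : ℕ) (i j : ZMod e) : ℤ :=
  (if i = j then 2 else 0) - (if i = j + 1 then 1 else 0) - (if i = j - 1 then 1 else 0)

/-- Partial sums defining the dominance order on ℓ-multipartitions (of at most n nodes). -/
def domWt (n : ℕ) {ℓ : ℕ} (μ : Fin ℓ → ℕ → ℕ) (l : Fin ℓ) (i : ℕ) : ℕ :=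
  (∑ l' ∈ Finset.univ.filter fun l' => l' < l, ∑ j ∈ Finset.range n, μ l' j) +
    ∑ j ∈ Finset.range (i + 1), μ l j

/-- μ dominates ν. -/
def Dominates (n : ℕ) {ℓ : ℕ} (μ ν : Fin ℓ → ℕ → ℕ) : Prop :=
  ∀ (l : Fin ℓ) (i : ℕ), domWt n ν l i ≤ domWt n μ l i

/-! Let `μ` be the common shape of `s` and `t` before step `r`, and `A`, `B` the nodes of `t`
containing `r`, `r + 1`. All other summands of the two degrees agree, so only the two orders of
adding `A` and `B` to `μ` matter. Adding an addable node `A` of residue `i` changes the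
addable-minus-removable count only at `A` itself (by `-2`) and at one node of each residue `i ± 1`
(by `+1`): the node right of or above `A`, and the node below or left of `A`. Hence the terms of
`B` in `deg t` and `deg s` differ by the changes, caused by adding `A`, at nodes of residue `res B`
after `B`, and symmetrically for `A`. Dominance puts `B` in an earlier row than `A`, so all three
nodes changed by adding `A` lie after `B`, whereas of the nodes changed by adding `B` only the one
below `B` can lie after `A`, and only when `B` is diagonally above and right of `A`, which makes
its residue `res A + 1 ≠ res A`. Hence `deg t - deg s = -(α_{res A}, α_{res B})`. -/

section

variable {ℓ : ℕ}

instance (μ : Fin ℓ → ℕ → ℕ) : DecidablePred (AddableNode μ) := fun _ => by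
  unfold AddableNode; infer_instance

instance (μ : Fin ℓ → ℕ → ℕ) : DecidablePred (RemovableNode μ) := fun _ => by
  unfold RemovableNode; infer_instance

instance (a b : MNode ℓ) : Decidable (nodeLt a b) := by
  unfold nodeLt; infer_instance

def addNode (μ : Fin ℓ → ℕ → ℕ) (A : MNode ℓ) : Fin ℓ → ℕ → ℕ :=
  fun l r => μ l r + if A.1 = l ∧ A.2.1 = r then 1 else 0

section addNode

variable {μ : Fin ℓ → ℕ → ℕ} {A : MNode ℓ}

@[simp] lemma addNode_self (l : Fin ℓ) (a b : ℕ) : addNode μ (l, a, b) l a = μ l a + 1 := by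
  simp [addNode]

lemma addNode_of_ne {m : Fin ℓ} {r : ℕ} (h : A.1 ≠ m ∨ A.2.1 ≠ r) : addNode μ A m r = μ m r := by
  simp only [addNode, add_eq_left, ite_eq_right_iff, one_ne_zero, imp_false]
  tauto

lemma le_addNode (m : Fin ℓ) (r : ℕ) : μ m r ≤ addNode μ A m r := Nat.le_add_right _ _

lemma addNode_comm (B : MNode ℓ) : addNode (addNode μ A) B = addNode (addNode μ B) A := by
  funext m r; simp only [addNode]; ring

end addNode

lemma shapeOf_succ (X : ℕ → MNode ℓ) (k : ℕ) :
    shapeOf X (k + 1) = addNode (shapeOf X k) (X k) := by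
  funext l r
  simp only [shapeOf, addNode, Finset.range_add_one, Finset.filter_insert]
  split_ifs with h
  · rw [Finset.card_insert_of_notMem (by simp)]
  · rfl

structure IsMultipartition (μ : Fin ℓ → ℕ → ℕ) : Prop where
  antitone : ∀ l, Antitone (μ l)
  eventually_zero : ∃ M, ∀ l r, M ≤ r → μ l r = 0

lemma IsMultipartition.addNode {μ : Fin ℓ → ℕ → ℕ} (hμ : IsMultipartition μ) {A : MNode ℓ}
    (hA : AddableNode μ A) : IsMultipartition (addNode μ A) where
  antitone l := by
    refine antitone_nat_of_succ_le fun r => ?_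
    by_cases h : A.1 = l ∧ A.2.1 = r + 1
    · obtain ⟨m, a, b⟩ := A
      obtain ⟨rfl, rfl⟩ := h
      have := hA.2
      simp only [Nat.add_sub_cancel] at this
      rw [addNode_self, addNode_of_ne (by simp)]
      dsimp only at this ⊢
      omega
    · rw [addNode_of_ne (not_and_or.mp h)]
      exact (hμ.antitone l (Nat.le_succ r)).trans (le_addNode l r)
  eventually_zero := by
    obtain ⟨M, hM⟩ := hμ.eventually_zero
    refine ⟨max M (A.2.1 + 1), fun l r hr => ?_⟩
    rw [addNode_of_ne (Or.inr (by omega)), hM l r (le_of_max_le_left hr)]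

lemma isMultipartition_shapeOf {X : ℕ → MNode ℓ} {k : ℕ}
    (hX : ∀ j < k, AddableNode (shapeOf X j) (X j)) : IsMultipartition (shapeOf X k) := by
  induction k with
  | zero => exact ⟨fun _ _ _ _ => by simp [shapeOf], ⟨0, fun _ _ _ => by simp [shapeOf]⟩⟩
  | succ k ih =>
    rw [shapeOf_succ]
    exact (ih fun j hj => hX j (by omega)).addNode (hX k (by omega))

lemma IsMultipartition.finite_addable_or_removable {μ : Fin ℓ → ℕ → ℕ} (hμ : IsMultipartition μ) :
    {B | AddableNode μ B ∨ RemovableNode μ B}.Finite := by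
  obtain ⟨M, hM⟩ := hμ.eventually_zero
  have hcol : ∀ l r, μ l r ≤ ∑ l', μ l' 0 := fun l r =>
    (hμ.antitone l (Nat.zero_le r)).trans
      (Finset.single_le_sum (f := fun l' => μ l' 0) (fun _ _ => Nat.zero_le _) (Finset.mem_univ l))
  refine ((Set.finite_univ (α := Fin ℓ)).prod
    ((Set.finite_Iic M).prod (Set.finite_Iic (∑ l', μ l' 0)))).subset ?_
  rintro ⟨l, r, c⟩ hB
  simp only [Set.mem_prod, Set.mem_univ, Set.mem_Iic, true_and]
  rcases hB with ⟨hc, hr⟩ | ⟨hc, -⟩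
  · dsimp only at hc hr
    refine ⟨?_, hc ▸ hcol l r⟩
    by_contra! h
    have := hM l (r - 1) (by omega)
    omega
  · dsimp only at hc
    refine ⟨?_, by have := hcol l r; omega⟩
    by_contra! h
    have := hM l r h.le
    omega

lemma ncard_setOf_eq_card_filter {α : Type*} {p q : α → Prop} [DecidablePred p]
    [DecidablePred q] {S : Finset α} (hS : ∀ x, p x → x ∈ S) :
    {x | p x ∧ q x}.ncard = ((S.filter q).filter p).card := by
  rw [← Set.ncard_coe_finset]
  congr 1
  ext x
  simp only [Set.mem_ofPred_eq, Finset.coe_filter, Finset.mem_filter]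
  exact ⟨fun h => ⟨⟨hS x h.1, h.2⟩, h.1⟩, fun h => ⟨h.2, h.1.2⟩⟩

def nodeSign (μ : Fin ℓ → ℕ → ℕ) (B : MNode ℓ) : ℤ :=
  (if AddableNode μ B then 1 else 0) - (if RemovableNode μ B then 1 else 0)

lemma dA_eq_sum_nodeSign (e : ℕ) (κ : Fin ℓ → ℤ) {μ : Fin ℓ → ℕ → ℕ} (N : MNode ℓ)
    {S : Finset (MNode ℓ)} (hS : ∀ B, AddableNode μ B ∨ RemovableNode μ B → B ∈ S) :
    dA e κ μ N = ∑ B ∈ S with resN e κ B = resN e κ N ∧ nodeLt N B, nodeSign μ B := by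
  simp only [dA, nodeSign]
  rw [Finset.sum_sub_distrib, Finset.sum_boole, Finset.sum_boole,
    ncard_setOf_eq_card_filter (S := S) (fun B h => hS B (Or.inl h)),
    ncard_setOf_eq_card_filter (S := S) (fun B h => hS B (Or.inr h))]

section nodeSign

variable {μ : Fin ℓ → ℕ → ℕ} {B : MNode ℓ}

lemma AddableNode.not_removableNode (h : AddableNode μ B) : ¬ RemovableNode μ B :=
  fun h' => by have := h.1; have := h'.1; omega

lemma nodeSign_of_addableNode (h : AddableNode μ B) : nodeSign μ B = 1 := by
  simp [nodeSign, h, h.not_removableNode]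

lemma nodeSign_of_removableNode (h : RemovableNode μ B) : nodeSign μ B = -1 := by
  simp [nodeSign, h, mt AddableNode.not_removableNode (not_not.mpr h)]

lemma nodeSign_of_not (h : ¬ AddableNode μ B) (h' : ¬ RemovableNode μ B) : nodeSign μ B = 0 := by
  simp [nodeSign, h, h']

end nodeSign

def nodeContent (B : MNode ℓ) : ℤ := (B.2.2 : ℤ) - B.2.1

lemma resN_eq (e : ℕ) (κ : Fin ℓ → ℤ) (B : MNode ℓ) :
    resN e κ B = ((κ B.1 + nodeContent B : ℤ) : ZMod e) := by
  simp only [resN, nodeContent]; ring_nf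

/-- The nodes of residue `res A + 1` and `res A - 1` whose addable/removable status changes when
the addable node `A` is added to `μ`: the node right of `A` (resp. below `A`) when it becomes
addable, otherwise the node above `A` (resp. left of `A`), which ceases to be removable. -/
def succNode (μ : Fin ℓ → ℕ → ℕ) (A : MNode ℓ) : MNode ℓ :=
  if A.2.1 = 0 ∨ A.2.2 + 1 < μ A.1 (A.2.1 - 1) then (A.1, A.2.1, A.2.2 + 1)
  else (A.1, A.2.1 - 1, A.2.2)

def predNode (μ : Fin ℓ → ℕ → ℕ) (A : MNode ℓ) : MNode ℓ :=
  if μ A.1 (A.2.1 + 1) = A.2.2 then (A.1, A.2.1 + 1, A.2.2) else (A.1, A.2.1, A.2.2 - 1)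

section neighbours

variable {μ : Fin ℓ → ℕ → ℕ} {A : MNode ℓ}

lemma succNode_fst : (succNode μ A).1 = A.1 := by
  unfold succNode; split_ifs <;> rfl

lemma predNode_fst : (predNode μ A).1 = A.1 := by
  unfold predNode; split_ifs <;> rfl

lemma nodeContent_succNode : nodeContent (succNode μ A) = nodeContent A + 1 := by
  unfold succNode nodeContent
  split_ifs with h
  · push_cast; ring
  · push_cast [Nat.cast_sub (Nat.one_le_iff_ne_zero.mpr (not_or.mp h).1)]; ring

lemma nodeContent_predNode (hμ : ∀ l, Antitone (μ l)) (hA : AddableNode μ A) :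
    nodeContent (predNode μ A) = nodeContent A - 1 := by
  unfold predNode nodeContent
  split_ifs with h
  · push_cast; ring
  · have := hμ A.1 (Nat.le_add_right A.2.1 1)
    have := hA.1
    push_cast [Nat.cast_sub (show 1 ≤ A.2.2 by omega)]; ring

lemma resN_succNode (e : ℕ) (κ : Fin ℓ → ℤ) :
    resN e κ (succNode μ A) = resN e κ A + 1 := by
  rw [resN_eq, resN_eq, succNode_fst, nodeContent_succNode]; push_cast; ring

lemma resN_predNode (e : ℕ) (κ : Fin ℓ → ℤ) (hμ : ∀ l, Antitone (μ l)) (hA : AddableNode μ A) :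
    resN e κ (predNode μ A) = resN e κ A - 1 := by
  rw [resN_eq, resN_eq, predNode_fst, nodeContent_predNode hμ hA]; push_cast; ring

end neighbours

section nodeSign_addNode

variable {μ : Fin ℓ → ℕ → ℕ} {A B : MNode ℓ}

lemma nodeSign_addNode_self (hμ : ∀ l, Antitone (μ l)) (hA : AddableNode μ A) :
    nodeSign (addNode μ A) A = nodeSign μ A - 2 := by
  obtain ⟨l, a, b⟩ := A
  have hrem : RemovableNode (addNode μ (l, a, b)) (l, a, b) := by
    refine ⟨by rw [addNode_self, hA.1], ?_⟩
    rw [addNode_of_ne (Or.inr (by dsimp only; omega)), hA.1]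
    exact hμ l (Nat.le_add_right _ 1)
  rw [nodeSign_of_removableNode hrem, nodeSign_of_addableNode hA]
  norm_num

lemma nodeSign_addNode_succNode (hA : AddableNode μ A) :
    nodeSign (addNode μ A) (succNode μ A) = nodeSign μ (succNode μ A) + 1 := by
  obtain ⟨l, a, b⟩ := A
  obtain ⟨hb, ha⟩ := hA
  dsimp only at hb ha
  subst hb
  unfold succNode
  dsimp only
  split_ifs with h
  · have hadd : AddableNode (addNode μ (l, a, μ l a)) (l, a, μ l a + 1) := by
      refine ⟨(addNode_self _ _ _).symm, ?_⟩
      rcases Nat.eq_zero_or_pos a with ha0 | ha0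
      · exact Or.inl ha0
      · dsimp only
        rw [addNode_self, addNode_of_ne (Or.inr (by dsimp only; omega))]
        omega
    rw [nodeSign_of_addableNode hadd, nodeSign_of_not]
    · norm_num
    · rintro ⟨h1, -⟩; dsimp only at h1; omega
    · rintro ⟨h1, -⟩; dsimp only at h1; omega
  · have ha0 : a ≠ 0 := (not_or.mp h).1
    have hrow : addNode μ (l, a, μ l a) l (a - 1) = μ l (a - 1) :=
      addNode_of_ne (Or.inr (by dsimp only; omega))
    have hrem : RemovableNode μ (l, a - 1, μ l a) := ⟨by dsimp only; omega, by
      dsimp only; rw [Nat.sub_add_cancel (by omega)]⟩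
    rw [nodeSign_of_removableNode hrem, nodeSign_of_not]
    · norm_num
    · rintro ⟨h1, -⟩; dsimp only at h1; rw [hrow] at h1; omega
    · rintro ⟨-, h2⟩; dsimp only at h2; rw [Nat.sub_add_cancel (by omega), addNode_self] at h2
      omega

lemma nodeSign_addNode_predNode (hμ : ∀ l, Antitone (μ l)) (hA : AddableNode μ A) :
    nodeSign (addNode μ A) (predNode μ A) = nodeSign μ (predNode μ A) + 1 := by
  obtain ⟨l, a, b⟩ := A
  obtain ⟨hb, -⟩ := hA
  dsimp only at hb
  subst hb
  have hle := hμ l (Nat.le_add_right a 1)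
  have hrow : addNode μ (l, a, μ l a) l (a + 1) = μ l (a + 1) := addNode_of_ne (by simp)
  unfold predNode
  dsimp only
  split_ifs with h
  · have hadd : AddableNode (addNode μ (l, a, μ l a)) (l, a + 1, μ l a) := by
      refine ⟨by dsimp only; rw [hrow, h], Or.inr ?_⟩
      dsimp only; rw [hrow, Nat.add_sub_cancel, addNode_self]; omega
    rw [nodeSign_of_addableNode hadd, nodeSign_of_not]
    · norm_num
    · rintro ⟨-, h2 | h2⟩ <;> simp_all
    · rintro ⟨h1, -⟩; dsimp only at h1; omega
  · have hrem : RemovableNode μ (l, a, μ l a - 1) := ⟨by dsimp only; omega, by dsimp only; omega⟩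
    rw [nodeSign_of_removableNode hrem, nodeSign_of_not]
    · norm_num
    · rintro ⟨h1, -⟩; dsimp only at h1; rw [addNode_self] at h1; omega
    · rintro ⟨h1, -⟩; dsimp only at h1; rw [addNode_self] at h1; omega

lemma addableNode_addNode_iff (hA : AddableNode μ A) (hB : B ≠ A)
    (hP : B ≠ succNode μ A) (hQ : B ≠ predNode μ A) :
    AddableNode (addNode μ A) B ↔ AddableNode μ B := by
  obtain ⟨l, a, b⟩ := A
  obtain ⟨m, u, v⟩ := B
  obtain ⟨hb, ha⟩ := hA
  dsimp only at hb ha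
  subst hb
  simp only [AddableNode]
  constructor
  · rintro ⟨h1, h2⟩
    by_cases hrow : l = m ∧ a = u
    · obtain ⟨rfl, rfl⟩ := hrow
      refine absurd ?_ hP
      rw [addNode_self] at h1
      have : a = 0 ∨ μ l a + 1 < μ l (a - 1) := by
        rcases Nat.eq_zero_or_pos a with ha0 | ha0
        · exact Or.inl ha0
        · rw [addNode_self,
            addNode_of_ne (Or.inr (by dsimp only; omega))] at h2
          omega
      simp [succNode, this, h1]
    rw [addNode_of_ne (not_and_or.mp hrow)] at h1 h2
    refine ⟨h1, h2.imp_right fun h2 => ?_⟩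
    by_cases hrow' : l = m ∧ a = u - 1
    · obtain ⟨rfl, hu⟩ := hrow'
      obtain rfl : u = a + 1 := by omega
      rw [Nat.add_sub_cancel, addNode_self] at h2
      rw [Nat.add_sub_cancel]
      by_contra h3
      refine hQ ?_
      simp [predNode, h1, show μ l (a + 1) = μ l a by omega]
    · rwa [addNode_of_ne (not_and_or.mp hrow')] at h2
  · rintro ⟨h1, h2⟩
    have hrow : ¬(l = m ∧ a = u) := by
      rintro ⟨rfl, rfl⟩
      exact hB (by rw [h1])
    rw [addNode_of_ne (not_and_or.mp hrow)]
    exact ⟨h1, h2.imp_right fun h2 => h2.trans_le (le_addNode _ _)⟩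

lemma removableNode_addNode_iff (hA : AddableNode μ A) (hB : B ≠ A)
    (hP : B ≠ succNode μ A) (hQ : B ≠ predNode μ A) :
    RemovableNode (addNode μ A) B ↔ RemovableNode μ B := by
  obtain ⟨l, a, b⟩ := A
  obtain ⟨m, u, v⟩ := B
  obtain ⟨hb, -⟩ := hA
  dsimp only at hb
  subst hb
  simp only [RemovableNode]
  constructor
  · rintro ⟨h1, h2⟩
    have hrow : ¬(l = m ∧ a = u) := by
      rintro ⟨rfl, rfl⟩
      rw [addNode_self] at h1
      exact hB (by rw [Nat.add_right_cancel h1])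
    rw [addNode_of_ne (not_and_or.mp hrow)] at h1
    exact ⟨h1, (le_addNode _ _).trans h2⟩
  · rintro ⟨h1, h2⟩
    have hrow : ¬(l = m ∧ a = u) := by
      rintro ⟨rfl, rfl⟩
      refine hQ ?_
      simp [predNode, show μ l (a + 1) ≠ μ l a by omega, show v = μ l a - 1 by omega]
    rw [addNode_of_ne (not_and_or.mp hrow)]
    refine ⟨h1, ?_⟩
    by_cases hrow' : l = m ∧ a = u + 1
    · obtain ⟨rfl, rfl⟩ := hrow'
      rw [addNode_self]
      by_contra h3
      refine hP ?_
      simp [succNode, show v = μ l (u + 1) by omega, show μ l u = μ l (u + 1) + 1 by omega]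
    · rwa [addNode_of_ne (not_and_or.mp hrow')]

lemma succNode_ne_self : succNode μ A ≠ A := fun h => by
  have := congrArg nodeContent h; rw [nodeContent_succNode] at this; omega

lemma predNode_ne_self (hμ : ∀ l, Antitone (μ l)) (hA : AddableNode μ A) : predNode μ A ≠ A :=
  fun h => by have := congrArg nodeContent h; rw [nodeContent_predNode hμ hA] at this; omega

lemma succNode_ne_predNode (hμ : ∀ l, Antitone (μ l)) (hA : AddableNode μ A) :
    succNode μ A ≠ predNode μ A := fun h => by
  have := congrArg nodeContent h; rw [nodeContent_succNode, nodeContent_predNode hμ hA] at this; omega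

lemma nodeSign_addNode (hμ : ∀ l, Antitone (μ l)) (hA : AddableNode μ A) (B : MNode ℓ) :
    nodeSign (addNode μ A) B = nodeSign μ B + (if B = succNode μ A then 1 else 0)
      + (if B = predNode μ A then 1 else 0) - (if B = A then 2 else 0) := by
  by_cases hBA : B = A
  · subst hBA
    simp [nodeSign_addNode_self hμ hA, succNode_ne_self.symm, (predNode_ne_self hμ hA).symm]
  by_cases hBP : B = succNode μ A
  · subst hBP
    simp [nodeSign_addNode_succNode hA, succNode_ne_predNode hμ hA, hBA]
  by_cases hBQ : B = predNode μ A
  · subst hBQ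
    simp [nodeSign_addNode_predNode hμ hA, hBA, hBP]
  simp [nodeSign, addableNode_addNode_iff hA hBA hBP hBQ,
    removableNode_addNode_iff hA hBA hBP hBQ, hBA, hBP, hBQ]

lemma dA_addNode (e : ℕ) (κ : Fin ℓ → ℤ) (hμ : IsMultipartition μ) (hA : AddableNode μ A)
    (N : MNode ℓ) :
    dA e κ (addNode μ A) N = dA e κ μ N
      + (if resN e κ A + 1 = resN e κ N ∧ nodeLt N (succNode μ A) then 1 else 0)
      + (if resN e κ A - 1 = resN e κ N ∧ nodeLt N (predNode μ A) then 1 else 0)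
      - (if resN e κ A = resN e κ N ∧ nodeLt N A then 2 else 0) := by
  set S := hμ.finite_addable_or_removable.toFinset ∪
    (hμ.addNode hA).finite_addable_or_removable.toFinset
  have hS : ∀ B, (AddableNode μ B ∨ RemovableNode μ B) ∨
      (AddableNode (addNode μ A) B ∨ RemovableNode (addNode μ A) B) → B ∈ S := by
    intro B hB
    simpa [S] using hB
  have hmem : ∀ B, nodeSign (addNode μ A) B ≠ nodeSign μ B → B ∈ S := fun B h => hS B (by
    by_contra! h'
    exact h (by rw [nodeSign_of_not h'.2.1 h'.2.2, nodeSign_of_not h'.1.1 h'.1.2]))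
  rw [dA_eq_sum_nodeSign e κ N (fun B h => hS B (.inl h)),
    dA_eq_sum_nodeSign e κ N (fun B h => hS B (.inr h))]
  simp only [nodeSign_addNode hμ.antitone hA, Finset.sum_add_distrib, Finset.sum_sub_distrib,
    Finset.sum_ite_eq', Finset.mem_filter]
  have hP := hmem _ (by rw [nodeSign_addNode_succNode hA]; omega)
  have hQ := hmem _ (by rw [nodeSign_addNode_predNode hμ.antitone hA]; omega)
  have hA' := hmem _ (by rw [nodeSign_addNode_self hμ.antitone hA]; omega)
  simp only [hP, hQ, hA', true_and, resN_succNode, resN_predNode e κ hμ.antitone hA]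

end nodeSign_addNode

def RowLt (B A : MNode ℓ) : Prop := B.1 < A.1 ∨ (B.1 = A.1 ∧ B.2.1 < A.2.1)

section RowLt

variable {A B : MNode ℓ}

lemma nodeLt_of_rowLt (h : RowLt B A) : nodeLt B A :=
  h.imp_right fun h => ⟨h.1, Or.inl h.2⟩

lemma not_nodeLt_of_rowLt (h : RowLt B A) : ¬ nodeLt A B := by
  unfold nodeLt
  rcases h with h | ⟨h1, h2⟩
  · rintro (h' | ⟨h', -⟩)
    · exact lt_asymm h h'
    · exact h.ne' h'
  · rw [h1]; omega

lemma rowLt_predNode (ν : Fin ℓ → ℕ → ℕ) (h : RowLt B A) : RowLt B (predNode ν A) := by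
  unfold RowLt predNode at *
  split_ifs <;> dsimp only <;> omega

lemma succNode_rowLt (ν : Fin ℓ → ℕ → ℕ) (h : RowLt B A) : RowLt (succNode ν B) A := by
  unfold RowLt succNode at *
  split_ifs <;> dsimp only <;> omega

lemma rowLt_succNode_addNode {μ : Fin ℓ → ℕ → ℕ} (hA : AddableNode μ A) (h : RowLt B A) :
    RowLt B (succNode (addNode μ B) A) := by
  obtain ⟨l, a, b⟩ := A
  obtain ⟨m, c, d⟩ := B
  obtain ⟨hb, ha⟩ := hA
  unfold succNode RowLt at *
  dsimp only at *
  subst hb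
  split_ifs with hP
  · exact h
  · rcases h with h | ⟨rfl, h⟩
    · exact Or.inl h
    · refine Or.inr ⟨rfl, ?_⟩
      by_contra hc
      dsimp only at hc
      obtain rfl : c = a - 1 := by omega
      rw [addNode_self] at hP
      omega

lemma not_nodeLt_predNode_addNode {e : ℕ} (he : (1 : ZMod e) ≠ 0) (κ : Fin ℓ → ℤ)
    {μ : Fin ℓ → ℕ → ℕ} (hA : AddableNode μ A) (h : RowLt B A)
    (hres : resN e κ B - 1 = resN e κ A) : ¬ nodeLt A (predNode (addNode μ A) B) := by
  obtain ⟨l, a, b⟩ := A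
  obtain ⟨m, c, d⟩ := B
  obtain ⟨hb, -⟩ := hA
  unfold predNode
  dsimp only at *
  split_ifs with hQ
  · -- then `B` is diagonally above and right of `A`, so `res B = res A + 2`
    intro hlt
    unfold nodeLt RowLt at *
    dsimp only at *
    obtain ⟨rfl, rfl⟩ : l = m ∧ a = c + 1 := by omega
    rw [addNode_self] at hQ
    apply he
    subst hQ hb
    simp only [resN] at hres
    push_cast at hres
    linear_combination hres
  · exact not_nodeLt_of_rowLt h

end RowLt

theorem dA_add_dA_swap (e : ℕ) (he : (1 : ZMod e) ≠ 0) (κ : Fin ℓ → ℤ)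
    {μ : Fin ℓ → ℕ → ℕ} (hμ : IsMultipartition μ) {A B : MNode ℓ}
    (hA : AddableNode μ A) (hB : AddableNode μ B)
    (hAB : AddableNode (addNode μ A) B) (hBA : AddableNode (addNode μ B) A) (h : RowLt B A) :
    dA e κ (addNode μ A) A + dA e κ (addNode (addNode μ A) B) B =
      dA e κ (addNode μ B) B + dA e κ (addNode (addNode μ B) A) A
        - cartanPairing e (resN e κ A) (resN e κ B) := by
  have hBsecond : dA e κ (addNode (addNode μ A) B) B = dA e κ (addNode μ B) B
      + (if resN e κ A + 1 = resN e κ B then 1 else 0)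
      + (if resN e κ A - 1 = resN e κ B then 1 else 0)
      - (if resN e κ A = resN e κ B then 2 else 0) := by
    rw [addNode_comm, dA_addNode e κ (hμ.addNode hB) hBA B]
    simp only [nodeLt_of_rowLt (rowLt_succNode_addNode hA h),
      nodeLt_of_rowLt (rowLt_predNode _ h), nodeLt_of_rowLt h, and_true]
  have hAsecond : dA e κ (addNode (addNode μ B) A) A = dA e κ (addNode μ A) A := by
    rw [addNode_comm, dA_addNode e κ (hμ.addNode hA) hAB A,
      if_neg fun h' => not_nodeLt_of_rowLt (succNode_rowLt _ h) h'.2,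
      if_neg fun h' => not_nodeLt_predNode_addNode he κ hA h h'.1 h'.2,
      if_neg fun h' => not_nodeLt_of_rowLt h h'.2]
    ring
  rw [hBsecond, hAsecond]
  simp only [cartanPairing, eq_sub_iff_add_eq, sub_eq_iff_eq_add]
  split_ifs <;> ring

lemma domWt_addNode (n : ℕ) (μ : Fin ℓ → ℕ → ℕ) (X : MNode ℓ) (l : Fin ℓ) (i : ℕ) :
    domWt n (addNode μ X) l i = domWt n μ l i + (if X.1 < l ∧ X.2.1 < n then 1 else 0)
      + (if X.1 = l ∧ X.2.1 ≤ i then 1 else 0) := by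
  have inner : ∀ l' m, ∑ j ∈ Finset.range m, (if X.1 = l' ∧ X.2.1 = j then 1 else 0) =
      if X.1 = l' ∧ X.2.1 < m then 1 else 0 := by
    intro l' m; by_cases h : X.1 = l' <;> simp [h]
  have outer : ∑ l' ∈ Finset.univ.filter (· < l), (if X.1 = l' ∧ X.2.1 < n then 1 else 0) =
      if X.1 < l ∧ X.2.1 < n then 1 else 0 := by
    by_cases h : X.2.1 < n <;> simp [h]
  simp only [domWt, addNode, Finset.sum_add_distrib, inner, outer, Nat.lt_succ_iff]
  ring

lemma rowLt_of_dominates_addNode {n : ℕ} {μ : Fin ℓ → ℕ → ℕ} {A B : MNode ℓ}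
    (hdom : Dominates n (addNode μ B) (addNode μ A)) (hne : ¬(B.1 = A.1 ∧ B.2.1 = A.2.1)) :
    RowLt B A := by
  have h := hdom A.1 A.2.1
  simp only [domWt_addNode, lt_irrefl, false_and, if_false, and_self, le_refl, if_true,
    add_zero] at h
  by_contra hlt
  rw [if_neg fun h' => hlt (Or.inl h'.1),
    if_neg fun h' => hlt (Or.inr ⟨h'.1, h'.2.lt_of_ne fun h'' => hne ⟨h'.1, h''⟩⟩)] at h
  omega

section swap

variable {At As : ℕ → MNode ℓ} {n q : ℕ}

lemma shapeOf_eq_of_swap (hagree : ∀ k < n, k ≠ q → k ≠ q + 1 → At k = As k)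
    (h1 : At q = As (q + 1)) (h2 : At (q + 1) = As q) :
    ∀ k ≤ n, k ≠ q + 1 → shapeOf At k = shapeOf As k := by
  intro k
  induction k using Nat.strong_induction_on with
  | _ k ih =>
    intro hkn hkq
    rcases k with _ | k
    · rfl
    by_cases hk : k = q + 1
    · subst hk
      rw [shapeOf_succ At, shapeOf_succ At, shapeOf_succ As, shapeOf_succ As,
        ih q (by omega) (by omega) (by omega), h1, h2, addNode_comm]
    · rw [shapeOf_succ, shapeOf_succ, ih k (by omega) (by omega) hk,
        hagree k (by omega) (by omega) hk]

lemma degBKW_sub_of_swap (hqn : q + 1 < n) (hagree : ∀ k < n, k ≠ q → k ≠ q + 1 → At k = As k)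
    (h1 : At q = As (q + 1)) (h2 : At (q + 1) = As q) (e : ℕ) (κ : Fin ℓ → ℤ) :
    degBKW e κ At n - degBKW e κ As n =
      (dA e κ (shapeOf At (q + 1)) (At q) + dA e κ (shapeOf At (q + 2)) (At (q + 1))) -
        (dA e κ (shapeOf As (q + 1)) (As q) + dA e κ (shapeOf As (q + 2)) (As (q + 1))) := by
  have hsub : ({q, q + 1} : Finset ℕ) ⊆ Finset.range n := by
    intro k hk
    simp only [Finset.mem_insert, Finset.mem_singleton] at hk
    rw [Finset.mem_range]
    omega
  rw [degBKW, degBKW, ← Finset.sum_sub_distrib, ← Finset.sum_subset hsub,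
    Finset.sum_pair (by omega)]
  · ring
  · intro k hk hkq
    simp only [Finset.mem_insert, Finset.mem_singleton, not_or] at hkq
    rw [Finset.mem_range] at hk
    rw [hagree k hk hkq.1 hkq.2, shapeOf_eq_of_swap hagree h1 h2 (k + 1) hk (by omega), sub_self]

end swap

end

theorem degree_swap_general (e n ℓ : ℕ) (he : 2 ≤ e) (κ : Fin ℓ → ℤ)
    (At As : ℕ → MNode ℓ) (r : ℕ) (hr : 1 ≤ r) (hrn : r < n)
    (hct : ∀ k < n, AddableNode (shapeOf At k) (At k))
    (hcs : ∀ k < n, AddableNode (shapeOf As k) (As k))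
    (hagree : ∀ k < n, k ≠ r - 1 → k ≠ r → At k = As k)
    (h1 : At (r - 1) = As r) (h2 : At r = As (r - 1))
    (hdiff : (At (r - 1)).1 ≠ (At r).1 ∨
      ((At (r - 1)).2.1 ≠ (At r).2.1 ∧ (At (r - 1)).2.2 ≠ (At r).2.2))
    (hdom : Dominates n (shapeOf As r) (shapeOf At r)) :
    degBKW e κ At n =
      degBKW e κ As n - cartanPairing e (resN e κ (At (r - 1))) (resN e κ (At r)) := by
  obtain ⟨q, rfl⟩ : ∃ q, r = q + 1 := ⟨r - 1, by omega⟩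
  simp only [Nat.add_sub_cancel] at hagree h1 h2 hdiff ⊢
  have hsq : shapeOf As q = shapeOf At q :=
    (shapeOf_eq_of_swap hagree h1 h2 q (by omega) (by omega)).symm
  have hAt : shapeOf At (q + 1) = addNode (shapeOf At q) (At q) := shapeOf_succ At q
  have hAs : shapeOf As (q + 1) = addNode (shapeOf At q) (At (q + 1)) := by
    rw [shapeOf_succ, hsq, h2]
  have hB := hcs q (by omega)
  have hBA := hcs (q + 1) hrn
  rw [hsq, ← h2] at hB
  rw [hAs, ← h1] at hBA
  have hlt : RowLt (At (q + 1)) (At q) := by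
    rw [hAs, hAt] at hdom
    exact rowLt_of_dominates_addNode hdom (by tauto)
  have hswap := dA_add_dA_swap e (by have : Fact (1 < e) := ⟨he⟩; exact one_ne_zero) κ
    (isMultipartition_shapeOf fun j hj => hct j (by omega)) (hct q (by omega)) hB
    (hAt ▸ hct (q + 1) hrn) hBA hlt
  have hdeg := degBKW_sub_of_swap hrn hagree h1 h2 e κ
  rw [shapeOf_succ At (q + 1), shapeOf_succ As (q + 1), hAt, hAs, ← h1, ← h2] at hdeg
  linarith

/-- If t = s·(r, r+1) where s, t are standard tableaux (encoded as chains of added nodes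
`At`, `As`), the entries r and r+1 lie in different rows and columns of t, and s dominates t,
then deg(t) = deg(s) − (α_{i_r}, α_{i_{r+1}}), where i_r, i_{r+1} are the residues of r and
r+1 in t. -/
theorem degree_swap (e n ℓ : ℕ) (he : 2 ≤ e) (hℓ : 0 < ℓ) (κ : Fin ℓ → ℤ)
    (At As : ℕ → MNode ℓ) (r : ℕ) (hr : 1 ≤ r) (hrn : r < n)
    (hct : ∀ k < n, AddableNode (shapeOf At k) (At k))
    (hcs : ∀ k < n, AddableNode (shapeOf As k) (As k))
    (hagree : ∀ k < n, k ≠ r - 1 → k ≠ r → At k = As k)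
    (h1 : At (r - 1) = As r) (h2 : At r = As (r - 1))
    (hdiff : (At (r - 1)).1 ≠ (At r).1 ∨
      ((At (r - 1)).2.1 ≠ (At r).2.1 ∧ (At (r - 1)).2.2 ≠ (At r).2.2))
    (hdom : Dominates n (shapeOf As r) (shapeOf At r)) :
    degBKW e κ At n =
      degBKW e κ As n - cartanPairing e (resN e κ (At (r - 1))) (resN e κ (At r)) :=
  degree_swap_general e n ℓ he κ At As r hr hrn hct hcs hagree h1 h2 hdiff hdom
end
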